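/- arXiv:1109.2557 — 2 statements merged into one kernel-verified Lean document; each statement's English description precedes it below -/
import Mathlib

section
/- Let C > 0. There exists a constant K > 0 depending only on C and T* − t0 such that the following holds for every positive integer N, every s ∈ [t0, T*), every index i with ϱ(s) + 2 ≤ i ≤ N, and every four times continuously differentiable function g : [T_{ℓ(s)}, T_i] → ℝ whose derivatives up to order four are bounded in absolute value by C. Define the quadrature S as the sum of: (a) the partial-interval three-node rule (T_{ϱ(s)} − s)(β₁ g(T_{ℓ(s)}) + β₂ g(T_{ϱ(s)}) + β₃ g(T_{ϱ(s)+1})) with θ = (T_{ϱ(s)} − s)/Δ, β₁ = (1/4)θ + (1/6)θ², β₂ = 1 − (1/3)θ², β₃ = −(1/4)θ + (1/6)θ²; and (b) if i − ϱ(s) is even, the composite Simpson rule (Δ/3)(g(T_{ϱ(s)}) + 4·Σ_{l=1}^{(i−ϱ(s))/2} g(T_{ϱ(s)+2l−1}) + 2·Σ_{l=1}^{(i−ϱ(s))/2 − 1} g(T_{ϱ(s)+2l}) + g(T_i)); while if i − ϱ(s) is odd, the composite Simpson rule on [T_{ϱ(s)}, T_{i−3}] (taken to be zero when i − 3 = ϱ(s))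 plus the Simpson 3/8 rule (3Δ/8)(g(T_{i−3}) + 3 g(T_{i−2}) + 3 g(T_{i−1}) + g(T_i)). Then |∫_s^{T_i} g(u) du − S| ≤ K Δ⁴, uniformly in s, i and Δ. -/
/-!
Each local rule integrates polynomials of low degree exactly: the Simpson and Simpson 3/8 rules
are exact up to degree three, the partial-interval rule up to degree two. Subtracting the Taylor
polynomial at the centre of the rule's window therefore bounds its error by
(length + ∑ |weights|) times the Taylor remainder on the window: `O(Δ⁵)` for each Simpson or 3/8
panel and `O(Δ⁴)` for the single partial panel. There are at most `(T* − t0)/Δ` panels, so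
their errors add up to `O(Δ⁴)` as well.
-/

/-- The maturity-time grid node `T_i = t0 + i·Δ` with `Δ = (T* − t0)/N`. -/
noncomputable def Tgrid (t0 Tstar : ℝ) (N i : ℕ) : ℝ := t0 + i * ((Tstar - t0) / N)

/-- The composite Simpson rule for `∫_{T_ρ}^{T_j} g` on the grid `Tgrid t0 Tstar N`
(for an even number `j − ρ` of subintervals), taken to be `0` when `j = ρ`. -/
noncomputable def simpsonComp (t0 Tstar : ℝ) (N : ℕ) (g : ℝ → ℝ) (ρ j : ℕ) : ℝ :=
  if j = ρ then 0 else
    ((Tstar - t0) / N) / 3 *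
      (g (Tgrid t0 Tstar N ρ)
        + 4 * ∑ l ∈ Finset.Icc 1 ((j - ρ) / 2), g (Tgrid t0 Tstar N (ρ + 2 * l - 1))
        + 2 * ∑ l ∈ Finset.Icc 1 ((j - ρ) / 2 - 1), g (Tgrid t0 Tstar N (ρ + 2 * l))
        + g (Tgrid t0 Tstar N j))

open Set
open scoped Nat

theorem integral_add_adjacent_intervals_of_continuousOn {g : ℝ → ℝ} {A B a b c : ℝ}
    (hg : ContinuousOn g (Icc A B)) (hA : A ≤ a) (hab : a ≤ b) (hbc : b ≤ c) (hB : c ≤ B) :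
    (∫ u in a..b, g u) + (∫ u in b..c, g u) = ∫ u in a..c, g u :=
  intervalIntegral.integral_add_adjacent_intervals
    ((hg.mono (Icc_subset_Icc hA (hbc.trans hB))).intervalIntegrable_of_Icc hab)
    ((hg.mono (Icc_subset_Icc (hA.trans hab) hB)).intervalIntegrable_of_Icc hbc)

theorem abs_sub_taylorWithinEval_le {g : ℝ → ℝ} {A B C : ℝ} {n : ℕ} (hAB : A < B)
    (hg : ContDiffOn ℝ (n + 1) g (Icc A B))
    (hC : ∀ y ∈ Icc A B, |iteratedDerivWithin (n + 1) g (Icc A B) y| ≤ C)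
    {x₀ y : ℝ} (hx₀ : x₀ ∈ Icc A B) (hy : y ∈ Icc A B) :
    |g y - taylorWithinEval g n (Icc A B) x₀ y| ≤ C * |y - x₀| ^ (n + 1) / n ! := by
  have hseg : uIcc x₀ y ⊆ Icc A B := uIcc_subset_Icc hx₀ hy
  have hdiff : DifferentiableOn ℝ (iteratedDerivWithin n g (Icc A B)) (Icc A B) :=
    hg.differentiableOn_iteratedDerivWithin (mod_cast n.lt_succ_self) (uniqueDiffOn_Icc hAB)
  have hderiv : ∀ t ∈ uIcc x₀ y, HasDerivWithinAt (fun z => taylorWithinEval g n (Icc A B) z y)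
      (((n ! : ℝ)⁻¹ * (y - t) ^ n) * iteratedDerivWithin (n + 1) g (Icc A B) t) (uIcc x₀ y) t :=
    fun t ht =>
      (hasDerivWithinAt_taylorWithinEval_at_Icc y hAB (hseg ht) hg.of_succ hdiff).mono hseg
  have hbound : ∀ t ∈ uIcc x₀ y,
      ‖((n ! : ℝ)⁻¹ * (y - t) ^ n) * iteratedDerivWithin (n + 1) g (Icc A B) t‖
        ≤ (n ! : ℝ)⁻¹ * |y - x₀| ^ n * C := by
    intro t ht
    rw [Real.norm_eq_abs, abs_mul, abs_mul, abs_pow, abs_inv, Nat.abs_cast]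
    have hpow : |y - t| ^ n ≤ |y - x₀| ^ n :=
      pow_le_pow_left₀ (abs_nonneg _) (abs_sub_right_of_mem_uIcc ht) n
    exact mul_le_mul (mul_le_mul_of_nonneg_left hpow (by positivity)) (hC t (hseg ht))
      (abs_nonneg _) (by positivity)
  have := (convex_uIcc x₀ y).norm_image_sub_le_of_norm_hasDerivWithin_le hderiv hbound
    left_mem_uIcc right_mem_uIcc
  rw [taylorWithinEval_self, Real.norm_eq_abs, Real.norm_eq_abs] at this
  calc _ ≤ _ := this
    _ = _ := by rw [pow_succ]; field_simp

theorem integral_taylorWithinEval_eq_sum {ι : Type*} (S : Finset ι) (w x : ι → ℝ)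
    (g : ℝ → ℝ) (n : ℕ) (s : Set ℝ) {x₀ a b : ℝ}
    (hexact : ∀ k ≤ n, ∫ u in a..b, (u - x₀) ^ k = ∑ j ∈ S, w j * (x j - x₀) ^ k) :
    ∫ u in a..b, taylorWithinEval g n s x₀ u
      = ∑ j ∈ S, w j * taylorWithinEval g n s x₀ (x j) := by
  simp only [taylor_within_apply, smul_eq_mul, Finset.mul_sum]
  rw [intervalIntegral.integral_finsetSum fun k _ =>
      (by fun_prop : Continuous _).intervalIntegrable _ _, Finset.sum_comm]
  refine Finset.sum_congr rfl fun k hk => ?_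
  rw [intervalIntegral.integral_mul_const, intervalIntegral.integral_const_mul,
    hexact k (Nat.lt_succ_iff.1 (Finset.mem_range.1 hk)), Finset.mul_sum, Finset.sum_mul]
  exact Finset.sum_congr rfl fun j _ => by ring

theorem abs_integral_sub_quadrature_le {ι : Type*} (S : Finset ι) (w x : ι → ℝ)
    {g : ℝ → ℝ} {A B C x₀ r a b : ℝ} {n : ℕ} (hAB : A < B)
    (hg : ContDiffOn ℝ (n + 1) g (Icc A B))
    (hC : ∀ y ∈ Icc A B, |iteratedDerivWithin (n + 1) g (Icc A B) y| ≤ C)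
    (hwin : Icc (x₀ - r) (x₀ + r) ⊆ Icc A B) (hab : a ≤ b)
    (hI : Icc a b ⊆ Icc (x₀ - r) (x₀ + r)) (hx : ∀ j ∈ S, x j ∈ Icc (x₀ - r) (x₀ + r))
    (hexact : ∀ k ≤ n, ∫ u in a..b, (u - x₀) ^ k = ∑ j ∈ S, w j * (x j - x₀) ^ k) :
    |(∫ u in a..b, g u) - ∑ j ∈ S, w j * g (x j)|
      ≤ (b - a + ∑ j ∈ S, |w j|) * (C * r ^ (n + 1) / n !) := by
  set P := taylorWithinEval g n (Icc A B) x₀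
  have hr : 0 ≤ r := by linarith [(hI (left_mem_Icc.2 hab)).1, (hI (left_mem_Icc.2 hab)).2]
  have hx₀ : x₀ ∈ Icc A B := hwin ⟨by linarith, by linarith⟩
  have herr : ∀ y ∈ Icc (x₀ - r) (x₀ + r), |g y - P y| ≤ C * r ^ (n + 1) / n ! := by
    intro y hy
    refine (abs_sub_taylorWithinEval_le hAB hg hC hx₀ (hwin hy)).trans ?_
    have hC0 : 0 ≤ C := (abs_nonneg _).trans (hC y (hwin hy))
    gcongr
    exact abs_sub_le_iff.2 ⟨by linarith [hy.2], by linarith [hy.1]⟩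
  have hgint : IntervalIntegrable g MeasureTheory.volume a b :=
    (hg.continuousOn.mono (hI.trans hwin)).intervalIntegrable_of_Icc hab
  have hPint : IntervalIntegrable P MeasureTheory.volume a b := by
    refine Continuous.intervalIntegrable ?_ a b
    show Continuous fun u => taylorWithinEval g n (Icc A B) x₀ u
    simp only [taylor_within_apply]
    fun_prop
  have hsplit : (∫ u in a..b, g u) - ∑ j ∈ S, w j * g (x j)
      = (∫ u in a..b, g u - P u) - ∑ j ∈ S, w j * (g (x j) - P (x j)) := by
    rw [intervalIntegral.integral_sub hgint hPint,
      integral_taylorWithinEval_eq_sum S w x g n _ hexact]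
    simp only [mul_sub, Finset.sum_sub_distrib]
    ring
  have hint : |∫ u in a..b, g u - P u| ≤ C * r ^ (n + 1) / n ! * (b - a) := by
    simpa [abs_of_nonneg (sub_nonneg.2 hab)] using
      intervalIntegral.norm_integral_le_of_norm_le_const fun y hy =>
        (Real.norm_eq_abs _).trans_le
          (herr y (hI (Ioc_subset_Icc_self (uIoc_of_le hab ▸ hy))))
  have hsum : |∑ j ∈ S, w j * (g (x j) - P (x j))|
      ≤ (∑ j ∈ S, |w j|) * (C * r ^ (n + 1) / n !) := by
    rw [Finset.sum_mul]
    refine (Finset.abs_sum_le_sum_abs _ _).trans (Finset.sum_le_sum fun j hj => ?_)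
    rw [abs_mul]
    exact mul_le_mul_of_nonneg_left (herr _ (hx j hj)) (abs_nonneg _)
  rw [hsplit]
  linarith [abs_sub (∫ u in a..b, g u - P u) (∑ j ∈ S, w j * (g (x j) - P (x j)))]

theorem abs_integral_sub_simpson_le {g : ℝ → ℝ} {A B C a h : ℝ} (hAB : A < B)
    (hg : ContDiffOn ℝ 4 g (Icc A B))
    (hC : ∀ y ∈ Icc A B, |iteratedDerivWithin 4 g (Icc A B) y| ≤ C)
    (hh : 0 ≤ h) (ha : A ≤ a) (hb : a + 2 * h ≤ B) :
    |(∫ u in a..a + 2 * h, g u) - h / 3 * (g a + 4 * g (a + h) + g (a + 2 * h))|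
      ≤ 2 / 3 * C * h ^ 5 := by
  have key := abs_integral_sub_quadrature_le Finset.univ ![h / 3, 4 * h / 3, h / 3]
    ![a, a + h, a + 2 * h] (n := 3) (x₀ := a + h) (r := h) (a := a) (b := a + 2 * h) hAB
    (by exact_mod_cast hg) hC (Icc_subset_Icc (by linarith) (by linarith)) (by linarith)
    (Icc_subset_Icc (by linarith) (by linarith))
    (by intro j _; fin_cases j <;> simp <;> (try constructor) <;> linarith)
    (by
      intro k hk
      simp only [intervalIntegral.integral_comp_sub_right fun u => u ^ k, integral_pow,
        Fin.sum_univ_succ]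
      interval_cases k <;> simp <;> ring)
  simp only [Fin.sum_univ_three, Matrix.cons_val_zero, Matrix.cons_val_one,
    Matrix.cons_val_two, Matrix.head_cons, Matrix.tail_cons] at key
  calc _ = _ := by ring_nf
    _ ≤ _ := key
    _ = _ := by
      rw [abs_of_nonneg (by positivity), abs_of_nonneg (by positivity)]
      norm_num [Nat.factorial]
      ring

theorem abs_integral_sub_simpson38_le {g : ℝ → ℝ} {A B C a h : ℝ} (hAB : A < B)
    (hg : ContDiffOn ℝ 4 g (Icc A B))
    (hC : ∀ y ∈ Icc A B, |iteratedDerivWithin 4 g (Icc A B) y| ≤ C)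
    (hh : 0 ≤ h) (ha : A ≤ a) (hb : a + 3 * h ≤ B) :
    |(∫ u in a..a + 3 * h, g u)
        - 3 * h / 8 * (g a + 3 * g (a + h) + 3 * g (a + 2 * h) + g (a + 3 * h))|
      ≤ 81 / 16 * C * h ^ 5 := by
  have key := abs_integral_sub_quadrature_le Finset.univ
    ![3 * h / 8, 9 * h / 8, 9 * h / 8, 3 * h / 8] ![a, a + h, a + 2 * h, a + 3 * h]
    (n := 3) (x₀ := a + 3 * h / 2) (r := 3 * h / 2) (a := a) (b := a + 3 * h) hAB
    (by exact_mod_cast hg) hC (Icc_subset_Icc (by linarith) (by linarith)) (by linarith)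
    (Icc_subset_Icc (by linarith) (by linarith))
    (by intro j _; fin_cases j <;> simp <;> (try constructor) <;> linarith)
    (by
      intro k hk
      simp only [intervalIntegral.integral_comp_sub_right fun u => u ^ k, integral_pow,
        Fin.sum_univ_succ]
      interval_cases k <;> simp <;> ring)
  simp only [Fin.sum_univ_four, Matrix.cons_val_zero, Matrix.cons_val_one,
    Matrix.cons_val_two, Matrix.cons_val_three, Matrix.head_cons, Matrix.tail_cons] at key
  calc _ = _ := by ring_nf
    _ ≤ _ := key
    _ = _ := by
      rw [abs_of_nonneg (by positivity), abs_of_nonneg (by positivity)]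
      norm_num [Nat.factorial]
      ring

theorem abs_integral_sub_partialRule_le {g : ℝ → ℝ} {A B C c Δ θ : ℝ} (hAB : A < B)
    (hg : ContDiffOn ℝ 3 g (Icc A B))
    (hC : ∀ y ∈ Icc A B, |iteratedDerivWithin 3 g (Icc A B) y| ≤ C)
    (hΔ : 0 ≤ Δ) (hA : A ≤ c - Δ) (hB : c + Δ ≤ B) (hθ₀ : 0 ≤ θ) (hθ₁ : θ ≤ 1) :
    |(∫ u in c - θ * Δ..c, g u) - θ * Δ *
        ((1/4 * θ + 1/6 * θ ^ 2) * g (c - Δ) + (1 - 1/3 * θ ^ 2) * g c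
          + (-(1/4) * θ + 1/6 * θ ^ 2) * g (c + Δ))|
      ≤ 2 * C * Δ ^ 4 := by
  have hθΔ : θ * Δ ≤ Δ := mul_le_of_le_one_left hΔ hθ₁
  have hC0 : 0 ≤ C := (abs_nonneg _).trans (hC c ⟨by linarith, by linarith⟩)
  have key := abs_integral_sub_quadrature_le Finset.univ
    ![θ * Δ * (1/4 * θ + 1/6 * θ ^ 2), θ * Δ * (1 - 1/3 * θ ^ 2),
      θ * Δ * (-(1/4) * θ + 1/6 * θ ^ 2)] ![c - Δ, c, c + Δ]
    (n := 2) (x₀ := c) (r := Δ) (a := c - θ * Δ) (b := c) hAB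
    (by exact_mod_cast hg) hC (Icc_subset_Icc hA hB) (by nlinarith)
    (Icc_subset_Icc (by linarith) (by linarith))
    (by intro j _; fin_cases j <;> simp <;> linarith)
    (by
      intro k hk
      simp only [intervalIntegral.integral_comp_sub_right fun u => u ^ k, integral_pow,
        Fin.sum_univ_succ]
      interval_cases k <;> simp <;> ring)
  have hβ : |1/4 * θ + 1/6 * θ ^ 2| + |1 - 1/3 * θ ^ 2| + |-(1/4) * θ + 1/6 * θ ^ 2| ≤ 3 := by
    have h1 : |1/4 * θ + 1/6 * θ ^ 2| ≤ 1 := abs_le.2 ⟨by nlinarith, by nlinarith⟩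
    have h2 : |1 - 1/3 * θ ^ 2| ≤ 1 := abs_le.2 ⟨by nlinarith, by nlinarith⟩
    have h3 : |-(1/4) * θ + 1/6 * θ ^ 2| ≤ 1 := abs_le.2 ⟨by nlinarith, by nlinarith⟩
    linarith
  simp only [Fin.sum_univ_three, Matrix.cons_val_zero, Matrix.cons_val_one,
    Matrix.cons_val_two, Matrix.head_cons, Matrix.tail_cons, abs_mul, abs_of_nonneg hθ₀,
    abs_of_nonneg hΔ] at key
  have hwidth : c - (c - θ * Δ) + (θ * Δ * |1/4 * θ + 1/6 * θ ^ 2|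
      + θ * Δ * |1 - 1/3 * θ ^ 2| + θ * Δ * |-(1/4) * θ + 1/6 * θ ^ 2|) ≤ 4 * Δ := by
    nlinarith [mul_le_mul_of_nonneg_left hβ (mul_nonneg hθ₀ hΔ)]
  calc _ = _ := by ring_nf
    _ ≤ _ := key
    _ ≤ 4 * Δ * (C * Δ ^ (2 + 1) / (2 ! : ℕ)) := by gcongr
    _ = 2 * C * Δ ^ 4 := by norm_num [Nat.factorial]; ring

section Grid

variable {t0 Tstar : ℝ} {N : ℕ}

theorem Tgrid_add (k r : ℕ) :
    Tgrid t0 Tstar N (k + r) = Tgrid t0 Tstar N k + r * ((Tstar - t0) / N) := by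
  simp only [Tgrid]; push_cast; ring

theorem Tgrid_mono (hΔ : 0 ≤ (Tstar - t0) / N) : Monotone (Tgrid t0 Tstar N) := fun k j hkj => by
  simp only [Tgrid]; gcongr

theorem simpsonComp_add_two (g : ℝ → ℝ) (ρ m : ℕ) :
    simpsonComp t0 Tstar N g ρ (ρ + 2 * (m + 1)) = simpsonComp t0 Tstar N g ρ (ρ + 2 * m)
      + (Tstar - t0) / N / 3 * (g (Tgrid t0 Tstar N (ρ + 2 * m))
        + 4 * g (Tgrid t0 Tstar N (ρ + 2 * m + 1)) + g (Tgrid t0 Tstar N (ρ + 2 * m + 2))) := by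
  rcases m with _ | m
  · simp [simpsonComp]
  · rw [simpsonComp, simpsonComp, if_neg (by omega), if_neg (by omega),
      show (ρ + 2 * (m + 1 + 1) - ρ) / 2 = m + 1 + 1 by omega,
      show (ρ + 2 * (m + 1) - ρ) / 2 = m + 1 by omega]
    simp only [Nat.add_sub_cancel]
    rw [Finset.sum_Icc_succ_top (by omega : 1 ≤ m + 1 + 1),
      Finset.sum_Icc_succ_top (by omega : 1 ≤ m + 1) fun l => g (Tgrid t0 Tstar N (ρ + 2 * l)),
      show ρ + 2 * (m + 1 + 1) - 1 = ρ + 2 * (m + 1) + 1 by omega,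
      show ρ + 2 * (m + 1 + 1) = ρ + 2 * (m + 1) + 2 by omega]
    ring

theorem abs_integral_sub_simpsonComp_le {g : ℝ → ℝ} {A B C : ℝ} (hAB : A < B)
    (hg : ContDiffOn ℝ 4 g (Icc A B))
    (hC : ∀ y ∈ Icc A B, |iteratedDerivWithin 4 g (Icc A B) y| ≤ C)
    (hΔ : 0 ≤ (Tstar - t0) / N) {ρ : ℕ} (hA : A ≤ Tgrid t0 Tstar N ρ) :
    ∀ m : ℕ, Tgrid t0 Tstar N (ρ + 2 * m) ≤ B →
      |(∫ u in Tgrid t0 Tstar N ρ..Tgrid t0 Tstar N (ρ + 2 * m), g u)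
          - simpsonComp t0 Tstar N g ρ (ρ + 2 * m)|
        ≤ 2 / 3 * C * ((Tstar - t0) / N) ^ 5 * m
  | 0, _ => by simp [simpsonComp]
  | m + 1, hB => by
    set Δ := (Tstar - t0) / N
    set a := Tgrid t0 Tstar N (ρ + 2 * m)
    have hnext : Tgrid t0 Tstar N (ρ + 2 * (m + 1)) = a + 2 * Δ := by
      rw [show ρ + 2 * (m + 1) = ρ + 2 * m + 2 by omega, Tgrid_add]; push_cast; ring
    have hmid : Tgrid t0 Tstar N (ρ + 2 * m + 1) = a + Δ := by rw [Tgrid_add]; push_cast; ring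
    have hend : Tgrid t0 Tstar N (ρ + 2 * m + 2) = a + 2 * Δ := by rw [Tgrid_add]; push_cast; ring
    have hρa : Tgrid t0 Tstar N ρ ≤ a := Tgrid_mono hΔ (Nat.le_add_right ρ (2 * m))
    have haA : A ≤ a := hA.trans hρa
    have haB : a ≤ B := (Tgrid_mono hΔ (by omega)).trans hB
    rw [hnext] at hB ⊢
    rw [← integral_add_adjacent_intervals_of_continuousOn hg.continuousOn hA
      hρa (by linarith : a ≤ a + 2 * Δ) hB, simpsonComp_add_two, hmid, hend,
      add_sub_add_comm]
    calc _ ≤ _ := abs_add_le _ _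
      _ ≤ 2 / 3 * C * Δ ^ 5 * m + 2 / 3 * C * Δ ^ 5 :=
        add_le_add (abs_integral_sub_simpsonComp_le hAB hg hC hΔ hA m haB)
          (abs_integral_sub_simpson_le hAB hg hC hΔ haA hB)
      _ = _ := by push_cast; ring

-- Meaningful only for `ρ + 2 ≤ i`, so that for odd `i - ρ` the truncated `i - 3` stays `≥ ρ`.
noncomputable def simpsonTail (t0 Tstar : ℝ) (N : ℕ) (g : ℝ → ℝ) (ρ i : ℕ) : ℝ :=
  if (i - ρ) % 2 = 0 then simpsonComp t0 Tstar N g ρ i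
  else simpsonComp t0 Tstar N g ρ (i - 3) + 3 * ((Tstar - t0) / N) / 8 *
    (g (Tgrid t0 Tstar N (i - 3)) + 3 * g (Tgrid t0 Tstar N (i - 2)) +
      3 * g (Tgrid t0 Tstar N (i - 1)) + g (Tgrid t0 Tstar N i))

theorem abs_integral_sub_simpsonTail_le {g : ℝ → ℝ} {A B C : ℝ} (hAB : A < B)
    (hg : ContDiffOn ℝ 4 g (Icc A B))
    (hC : ∀ y ∈ Icc A B, |iteratedDerivWithin 4 g (Icc A B) y| ≤ C)
    (hΔ : 0 ≤ (Tstar - t0) / N) {ρ i : ℕ} (hρi : ρ + 2 ≤ i)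
    (hA : A ≤ Tgrid t0 Tstar N ρ) (hB : Tgrid t0 Tstar N i ≤ B) :
    |(∫ u in Tgrid t0 Tstar N ρ..Tgrid t0 Tstar N i, g u) - simpsonTail t0 Tstar N g ρ i|
      ≤ 2 * C * ((Tstar - t0) / N) ^ 4 * (Tgrid t0 Tstar N i - Tgrid t0 Tstar N ρ) := by
  have hC0 : 0 ≤ C := (abs_nonneg _).trans (hC _ ⟨hA, (Tgrid_mono hΔ (by omega)).trans hB⟩)
  have hC5 : 0 ≤ C * ((Tstar - t0) / N) ^ 5 := by positivity
  rw [simpsonTail]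
  split_ifs with hpar
  · obtain ⟨m, rfl⟩ : ∃ m, i = ρ + 2 * m := ⟨(i - ρ) / 2, by omega⟩
    refine (abs_integral_sub_simpsonComp_le hAB hg hC hΔ hA m hB).trans ?_
    rw [Tgrid_add]
    push_cast
    nlinarith [mul_nonneg hC5 m.cast_nonneg]
  · obtain ⟨m, rfl⟩ : ∃ m, i = ρ + 2 * m + 3 := ⟨(i - ρ - 3) / 2, by omega⟩
    have hρa : Tgrid t0 Tstar N ρ ≤ Tgrid t0 Tstar N (ρ + 2 * m) :=
      Tgrid_mono hΔ (Nat.le_add_right ρ (2 * m))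
    have hnode (r : ℕ) : Tgrid t0 Tstar N (ρ + 2 * m + r)
        = Tgrid t0 Tstar N (ρ + 2 * m) + r * ((Tstar - t0) / N) := Tgrid_add _ _
    rw [show ρ + 2 * m + 3 - 3 = ρ + 2 * m by omega,
      show ρ + 2 * m + 3 - 2 = ρ + 2 * m + 1 by omega,
      show ρ + 2 * m + 3 - 1 = ρ + 2 * m + 2 by omega, hnode 1, hnode 2, hnode 3] at *
    push_cast [one_mul] at hB ⊢
    rw [← integral_add_adjacent_intervals_of_continuousOn hg.continuousOn hA hρa
      (by linarith) hB, add_sub_add_comm]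
    calc _ ≤ _ := abs_add_le _ _
      _ ≤ 2 / 3 * C * ((Tstar - t0) / N) ^ 5 * m + 81 / 16 * C * ((Tstar - t0) / N) ^ 5 := by
        gcongr
        · exact abs_integral_sub_simpsonComp_le hAB hg hC hΔ hA m (by linarith)
        · exact abs_integral_sub_simpson38_le hAB hg hC hΔ (hA.trans hρa) hB
      _ ≤ _ := by
        rw [Tgrid_add ρ (2 * m)]
        push_cast
        nlinarith [mul_nonneg hC5 m.cast_nonneg]

end Grid

/-- Order-four error bound, uniform in `s`, `i` and `Δ`, for the paper's composite
quadrature: the partial-interval three-node rule on `[s, T_{ϱ(s)}]` plus the composite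
Simpson rule (with a Simpson 3/8 correction on the last three subintervals when the
number of remaining subintervals is odd). -/
theorem composite_simpson_drift_quadrature_order_four
    (t0 Tstar : ℝ) (h : t0 < Tstar) (C : ℝ) (hC : 0 < C) :
    ∃ K > 0, ∀ N : ℕ, 0 < N →
      ∀ s : ℝ, t0 ≤ s → s < Tstar →
      ∀ ℓ : ℕ, Tgrid t0 Tstar N ℓ ≤ s → s < Tgrid t0 Tstar N (ℓ + 1) →
      ∀ i : ℕ, ℓ + 3 ≤ i → i ≤ N →
      ∀ g : ℝ → ℝ,
        ContDiffOn ℝ 4 g (Set.Icc (Tgrid t0 Tstar N ℓ) (Tgrid t0 Tstar N i)) →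
        (∀ j : ℕ, 1 ≤ j → j ≤ 4 →
          ∀ u ∈ Set.Icc (Tgrid t0 Tstar N ℓ) (Tgrid t0 Tstar N i),
            |iteratedDerivWithin j g
                (Set.Icc (Tgrid t0 Tstar N ℓ) (Tgrid t0 Tstar N i)) u| ≤ C) →
        let Δ : ℝ := (Tstar - t0) / N
        let θ : ℝ := (Tgrid t0 Tstar N (ℓ + 1) - s) / Δ
        let Spart : ℝ := (Tgrid t0 Tstar N (ℓ + 1) - s) *
          ((1/4 * θ + 1/6 * θ^2) * g (Tgrid t0 Tstar N ℓ) +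
           (1 - 1/3 * θ^2) * g (Tgrid t0 Tstar N (ℓ + 1)) +
           (-(1/4) * θ + 1/6 * θ^2) * g (Tgrid t0 Tstar N (ℓ + 2)))
        let S : ℝ := Spart +
          (if (i - (ℓ + 1)) % 2 = 0 then simpsonComp t0 Tstar N g (ℓ + 1) i
           else simpsonComp t0 Tstar N g (ℓ + 1) (i - 3) +
             3 * Δ / 8 *
               (g (Tgrid t0 Tstar N (i - 3)) + 3 * g (Tgrid t0 Tstar N (i - 2)) +
                3 * g (Tgrid t0 Tstar N (i - 1)) + g (Tgrid t0 Tstar N i)))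
        |(∫ u in s..(Tgrid t0 Tstar N i), g u) - S| ≤ K * Δ^4 := by
  refine ⟨2 * C * (1 + (Tstar - t0)), by nlinarith, ?_⟩
  intro N hN s _ _ ℓ hℓs hsℓ i hi hiN g hg hCg Δ θ Spart S
  have hΔ : 0 < Δ := div_pos (sub_pos.2 h) (Nat.cast_pos.2 hN)
  have hmono := Tgrid_mono (t0 := t0) (Tstar := Tstar) (N := N) hΔ.le
  have hAB : Tgrid t0 Tstar N ℓ < Tgrid t0 Tstar N i :=
    hℓs.trans_lt (hsℓ.trans_le (hmono (by omega)))
  have hstep (k : ℕ) : Tgrid t0 Tstar N (k + 1) = Tgrid t0 Tstar N k + Δ := by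
    simpa using Tgrid_add (t0 := t0) (Tstar := Tstar) (N := N) k 1
  have hθΔ : θ * Δ = Tgrid t0 Tstar N (ℓ + 1) - s := div_mul_cancel₀ _ hΔ.ne'
  have hθ₀ : 0 ≤ θ := div_nonneg (by linarith) hΔ.le
  have hθ₁ : θ ≤ 1 := (div_le_one hΔ).2 (by linarith [hstep ℓ])
  have hpart := abs_integral_sub_partialRule_le hAB (hg.of_le (by norm_num))
    (hCg 3 (by norm_num) (by norm_num)) hΔ.le (c := Tgrid t0 Tstar N (ℓ + 1))
    (by rw [hstep]; simp) (by rw [← hstep]; exact hmono (by omega)) hθ₀ hθ₁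
  rw [hθΔ, sub_sub_cancel, ← hstep, show Tgrid t0 Tstar N (ℓ + 1) - Δ = Tgrid t0 Tstar N ℓ by
    rw [hstep]; ring] at hpart
  have htail := abs_integral_sub_simpsonTail_le hAB hg (hCg 4 (by norm_num) le_rfl) hΔ.le
    (ρ := ℓ + 1) (by omega) (hmono (by omega)) le_rfl
  have hlen : Tgrid t0 Tstar N i - Tgrid t0 Tstar N (ℓ + 1) ≤ Tstar - t0 := by
    have hN : Tgrid t0 Tstar N N = Tstar := by simp [Tgrid, field]
    have h0 : Tgrid t0 Tstar N 0 = t0 := by simp [Tgrid]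
    linarith [hmono hiN, hmono (Nat.zero_le (ℓ + 1))]
  show |_ - (Spart + simpsonTail t0 Tstar N g (ℓ + 1) i)| ≤ _
  rw [← integral_add_adjacent_intervals_of_continuousOn hg.continuousOn hℓs hsℓ.le
    (hmono (by omega)) le_rfl, add_sub_add_comm]
  calc _ ≤ _ := abs_add_le _ _
    _ ≤ 2 * C * Δ ^ 4 + 2 * C * Δ ^ 4 * (Tstar - t0) :=
      add_le_add hpart (htail.trans (by gcongr))
    _ = _ := by ring
end

section
/- Under the stated assumptions, suppose additionally: (a) |f0(T)| ≤ C0 for all T ∈ [t0, T*]; (b) there are an integer θ ≥ 0 with ℓ(t*) + θ ≤ N and measurable coefficients λ_0(t),…,λ_θ(t) with |λ_i(t)| ≤ Λ such that |f(t, t) − Σ_{i=0}^{θ} λ_i(t) f(t, T_{ℓ(t)+i})| ≤ C₁ Δ^p for all t ∈ [t0, t*]; (c) there are weights γ̃_{ϱ(t*)},…,γ̃_N with |γ̃_j| ≤ Γ such that |Δ·Σ_{j=ϱ(t*)}^{N} γ̃_j f(t*, T_j) − ∫_{t*}^{T*} f(t*, u) du| ≤ C₁ Δ^p; (d) the quadrature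 in the dynamics has order p along the exact solution, i.e., |Δ·Σ_{k=ℓ(s)}^{κ(s,T_i)} γ_k(s) σ_j(s, T_k, f(s, T_k)) − ∫_s^{T_i} σ_j(s, u, f(s, u)) du| ≤ C₁ Δ^p for all s, i, j; and (e) G : ℝ → ℝ is globally Lipschitz. Define Y = ∫_{t0}^{t*} f(s, s) ds, Z = ∫_{t*}^{T*} f(t*, u) du, Ỹ = ∫_{t0}^{t*} Σ_{i=0}^{θ} λ_i(s) f̃^{ℓ(s)+i}(s) ds, and S̃_Z = Δ·Σ_{j=ϱ(t*)}^{N} γ̃_j f̃^j(t*). Then |e^{−Y} G(e^{−Z}) − e^{−Ỹ} G(e^{−S̃_Z})| ≤ K Δ^p, where K depends only on C, L, Γ, Λ, θ, C0, C₁, d, t* − t0, T* − t0, the Lipschitz constant of G and |G(0)|, but not on Δ or N. -/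
/-- `ℓ(s)`: the largest grid index `i` with `T_i ≤ s`. -/
noncomputable def ellIdx (t0 Tstar : ℝ) (N : ℕ) (s : ℝ) : ℕ :=
  Nat.floor ((s - t0) / ((Tstar - t0) / N))

/-!
The nodal error `e(t) = maxᵢ |f(t, Tᵢ) - f̃ⁱ(t)|` obeys a Gronwall inequality. Subtracting the two
integral equations, the difference of the drifts splits into the quadrature error along the exact
solution, which is `O(Δ^p)` by assumption (d), and a term bounded by a multiple of `e`, because
`σ` is bounded and Lipschitz and the quadrature weights have total mass at most `2 (T* - t0)`.
Hence `e = O(Δ^p)` uniformly in `N`. Assumptions (b) and (c) then give `Y - Ỹ = O(Δ^p)` and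
`Z - S̃_Z = O(Δ^p)`, and since `Y, Ỹ, Z, S̃_Z` are bounded independently of `N`, the payoff
`(Y, Z) ↦ e^{-Y} G(e^{-Z})` is Lipschitz on the range that matters.
-/

open MeasureTheory Set intervalIntegral

theorem abs_mul_sub_mul_le (a b a' b' : ℝ) :
    |a * b - a' * b'| ≤ |a - a'| * |b| + |a'| * |b - b'| := by
  calc |a * b - a' * b'| = |(a - a') * b + a' * (b - b')| := by ring_nf
    _ ≤ |a - a'| * |b| + |a'| * |b - b'| := by
      simpa only [abs_mul] using abs_add_le ((a - a') * b) (a' * (b - b'))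

theorem abs_sum_le_card_mul {ι : Type*} (s : Finset ι) {x : ι → ℝ} {B : ℝ}
    (hx : ∀ k ∈ s, |x k| ≤ B) : |∑ k ∈ s, x k| ≤ s.card * B := by
  rw [← nsmul_eq_mul]
  exact (Finset.abs_sum_le_sum_abs _ _).trans (Finset.sum_le_card_nsmul s _ B hx)

theorem abs_sum_mul_le_card_mul {ι : Type*} (s : Finset ι) {a b : ι → ℝ} {A B : ℝ}
    (ha : ∀ k ∈ s, |a k| ≤ A) (hb : ∀ k ∈ s, |b k| ≤ B) :
    |∑ k ∈ s, a k * b k| ≤ s.card * (A * B) :=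
  abs_sum_le_card_mul s fun k hk => by
    rw [abs_mul]
    exact mul_le_mul (ha k hk) (hb k hk) (abs_nonneg _) ((abs_nonneg _).trans (ha k hk))

theorem abs_exp_sub_exp_le {B x y : ℝ} (hx : x ≤ B) (hy : y ≤ B) :
    |Real.exp x - Real.exp y| ≤ Real.exp B * |x - y| := by
  have hbound : ∀ t ∈ uIoc y x, ‖Real.exp t‖ ≤ Real.exp B := fun t ht => by
    rw [Real.norm_eq_abs, abs_of_pos (Real.exp_pos t), Real.exp_le_exp]
    exact ht.2.trans (max_le hy hx)
  simpa [integral_exp, abs_sub_comm] using norm_integral_le_of_norm_le_const hbound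

theorem abs_exp_neg_mul_sub_exp_neg_mul_le {G : ℝ → ℝ} {LG : ℝ} (hLG : 0 ≤ LG)
    (hG : ∀ z z', |G z - G z'| ≤ LG * |z - z'|) {Y Y' Z Z' MY MY' MZ MZ' : ℝ}
    (hY : |Y| ≤ MY) (hY' : |Y'| ≤ MY') (hZ : |Z| ≤ MZ) (hZ' : |Z'| ≤ MZ') :
    |Real.exp (-Y) * G (Real.exp (-Z)) - Real.exp (-Y') * G (Real.exp (-Z'))|
      ≤ Real.exp (max MY MY') * ((|G 0| + LG * Real.exp MZ) * |Y - Y'|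
        + LG * Real.exp (max MZ MZ') * |Z - Z'|) := by
  have hexp : ∀ {X X' B B' : ℝ}, |X| ≤ B → |X'| ≤ B' →
      |Real.exp (-X) - Real.exp (-X')| ≤ Real.exp (max B B') * |X - X'| :=
      fun {X X' B B'} hX hX' => by
    have := abs_exp_sub_exp_le ((neg_le_abs _).trans (hX.trans (le_max_left _ _)))
      ((neg_le_abs _).trans (hX'.trans (le_max_right _ _)))
    rwa [neg_sub_neg, abs_sub_comm X'] at this
  have hGZ : |G (Real.exp (-Z))| ≤ |G 0| + LG * Real.exp MZ := by
    calc |G (Real.exp (-Z))| ≤ |G 0| + |G (Real.exp (-Z)) - G 0| := by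
          linarith [abs_sub_abs_le_abs_sub (G (Real.exp (-Z))) (G 0)]
      _ ≤ |G 0| + LG * Real.exp MZ := by
        gcongr
        refine (hG _ 0).trans (mul_le_mul_of_nonneg_left ?_ hLG)
        rw [sub_zero, abs_of_pos (Real.exp_pos _), Real.exp_le_exp]
        exact (neg_le_abs _).trans hZ
  have hY'exp : |Real.exp (-Y')| ≤ Real.exp (max MY MY') := by
    rw [abs_of_pos (Real.exp_pos _), Real.exp_le_exp]
    exact (neg_le_abs _).trans (hY'.trans (le_max_right _ _))
  calc _ ≤ |Real.exp (-Y) - Real.exp (-Y')| * |G (Real.exp (-Z))|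
        + |Real.exp (-Y')| * |G (Real.exp (-Z)) - G (Real.exp (-Z'))| := abs_mul_sub_mul_le ..
    _ ≤ (Real.exp (max MY MY') * |Y - Y'|) * (|G 0| + LG * Real.exp MZ)
        + Real.exp (max MY MY') * (LG * (Real.exp (max MZ MZ') * |Z - Z'|)) := by
      gcongr
      exacts [hexp hY hY', (hG _ _).trans (by gcongr; exact hexp hZ hZ')]
    _ = _ := by ring

theorem add_mul_gronwallBound_zero (K ε x : ℝ) :
    ε + K * gronwallBound 0 K ε x = ε * Real.exp (K * x) := by
  rcases eq_or_ne K 0 with rfl | hK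
  · simp
  · rw [gronwallBound_of_K_ne_0 hK]
    field_simp
    ring

theorem le_mul_exp_of_le_add_mul_integral {u : ℝ → ℝ} {a b K ε : ℝ} (hab : a ≤ b)
    (hK : 0 ≤ K) (hu : ContinuousOn u (Icc a b)) (hu0 : ∀ t ∈ Icc a b, 0 ≤ u t)
    (hle : ∀ t ∈ Icc a b, u t ≤ ε + K * ∫ s in a..t, u s) :
    ∀ t ∈ Icc a b, u t ≤ ε * Real.exp (K * (t - a)) := by
  -- extend `u` continuously to all of `ℝ` so that `∫ a..t, u` is differentiable everywhere
  set U : ℝ → ℝ := IccExtend hab ((Icc a b).domRestrict u)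
  have hUc : Continuous U := continuous_IccExtend_iff.2 hu.domRestrict
  have hUu : EqOn U u (Icc a b) := fun t ht => IccExtend_of_mem hab _ ht
  set v : ℝ → ℝ := fun t => ∫ s in a..t, U s
  have hv : ∀ t, HasDerivAt v (U t) t := fun t =>
    integral_hasDerivAt_right (hUc.intervalIntegrable _ _) (hUc.stronglyMeasurableAtFilter _ _)
      hUc.continuousAt
  have hvu : ∀ t ∈ Icc a b, v t = ∫ s in a..t, u s := fun t ht =>
    integral_congr fun s hs => hUu (uIcc_subset_Icc ⟨le_rfl, hab⟩ ⟨ht.1, ht.2⟩ hs)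
  have hv0 : ∀ t ∈ Icc a b, 0 ≤ v t := fun t ht => by
    rw [hvu t ht]
    exact integral_nonneg ht.1 fun s hs => hu0 s ⟨hs.1, hs.2.trans ht.2⟩
  have hgron : ∀ t ∈ Icc a b, ‖v t‖ ≤ gronwallBound 0 K ε (t - a) := by
    refine norm_le_gronwallBound_of_norm_deriv_right_le
      (fun t _ => (hv t).continuousAt.continuousWithinAt) (fun t _ => (hv t).hasDerivWithinAt)
      (by simp [v]) fun t ht => ?_
    have ht' : t ∈ Icc a b := Ico_subset_Icc_self ht
    rw [Real.norm_eq_abs, Real.norm_eq_abs, abs_of_nonneg (hUu ht' ▸ hu0 t ht'),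
      abs_of_nonneg (hv0 t ht'), hUu ht', hvu t ht']
    linarith [hle t ht']
  intro t ht
  calc u t ≤ ε + K * v t := hvu t ht ▸ hle t ht
    _ ≤ ε + K * gronwallBound 0 K ε (t - a) := by
      gcongr
      exact (le_abs_self _).trans (hgron t ht)
    _ = ε * Real.exp (K * (t - a)) := add_mul_gronwallBound_zero K ε (t - a)

theorem measurable_apply_of_measurable_index {α β ι : Type*} [MeasurableSpace α]
    [MeasurableSpace β] [MeasurableSpace ι] [Countable ι] [MeasurableSingletonClass ι]
    {φ : ι → α → β} (hφ : ∀ k, Measurable (φ k)) {n : α → ι} (hn : Measurable n) :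
    Measurable fun x => φ (n x) x :=
  (measurable_from_prod_countable_left (f := fun q : α × ι => φ q.2 q.1) hφ).comp
    (measurable_id.prodMk hn)

theorem measurable_intervalIntegral_of_measurable_uncurry {F : ℝ → ℝ → ℝ}
    (hF : Measurable (Function.uncurry F)) (b : ℝ) :
    Measurable fun s => ∫ u in s..b, F s u := by
  have hIoc : ∀ (l r : ℝ → ℝ), Measurable l → Measurable r →
      Measurable fun s => ∫ u in Ioc (l s) (r s), F s u := fun l r hl hr => by
    simp_rw [← MeasureTheory.integral_indicator measurableSet_Ioc]
    refine (StronglyMeasurable.integral_prod_right' (f := fun q : ℝ × ℝ =>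
      (Ioc (l q.1) (r q.1)).indicator (F q.1) q.2) ?_).measurable
    refine Measurable.stronglyMeasurable (Measurable.ite ?_ hF measurable_const)
    exact (measurableSet_lt (hl.comp measurable_fst) measurable_snd).inter
      (measurableSet_le measurable_snd (hr.comp measurable_fst))
  exact (hIoc id (fun _ => b) measurable_id measurable_const).sub
    (hIoc (fun _ => b) id measurable_const measurable_id)

theorem intervalIntegrable_of_eqOn_measurable {g h : ℝ → ℝ} {a b B : ℝ} (hh : Measurable h)
    (heq : EqOn g h (uIcc a b)) (hg : ∀ s ∈ uIcc a b, |g s| ≤ B) :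
    IntervalIntegrable g volume a b := by
  refine (intervalIntegrable_const (c := B)).mono_fun' (hh.aestronglyMeasurable.congr ?_) ?_
  · exact ae_restrict_of_forall_mem measurableSet_uIoc fun s hs => (heq (uIoc_subset_uIcc hs)).symm
  · exact ae_restrict_of_forall_mem measurableSet_uIoc fun s hs => hg s (uIoc_subset_uIcc hs)

theorem abs_integral_sub_integral_le {g h φ : ℝ → ℝ} {a b : ℝ} (hab : a ≤ b)
    (hg : IntervalIntegrable g volume a b) (hh : IntervalIntegrable h volume a b)
    (hφ : IntervalIntegrable φ volume a b) (hle : ∀ s ∈ Icc a b, |g s - h s| ≤ φ s) :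
    |(∫ s in a..b, g s) - ∫ s in a..b, h s| ≤ ∫ s in a..b, φ s := by
  rw [← integral_sub hg hh]
  exact (abs_integral_le_integral_abs hab).trans (integral_mono_on hab (hg.sub hh).abs hφ hle)

theorem abs_integral_le_mul_of_abs_le {g : ℝ → ℝ} {a b B : ℝ} (hab : a ≤ b)
    (hg : ∀ s ∈ Icc a b, |g s| ≤ B) : |∫ s in a..b, g s| ≤ (b - a) * B := by
  have := norm_integral_le_of_norm_le_const (a := a) (b := b) (f := g) fun s hs =>
    hg s (Ioc_subset_Icc_self (uIoc_of_le hab ▸ hs))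
  rwa [Real.norm_eq_abs, abs_of_nonneg (sub_nonneg.2 hab), mul_comm] at this

theorem abs_le_add_mul_of_eq_add_integral {x g : ℝ → ℝ} {x₀ a b A B : ℝ}
    (hx : ∀ t ∈ Icc a b, x t = x₀ + ∫ s in a..t, g s) (hx₀ : |x₀| ≤ A)
    (hg : ∀ s ∈ Icc a b, |g s| ≤ B) : ∀ t ∈ Icc a b, |x t| ≤ A + (b - a) * B := by
  intro t ht
  have hB0 : 0 ≤ B := (abs_nonneg _).trans (hg t ht)
  have hint := abs_integral_le_mul_of_abs_le ht.1 fun s hs => hg s ⟨hs.1, hs.2.trans ht.2⟩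
  calc |x t| ≤ |x₀| + |∫ s in a..t, g s| := hx t ht ▸ abs_add_le _ _
    _ ≤ A + (b - a) * B := by gcongr; exact hint.trans (by gcongr; linarith [ht.2])

section Grid

variable {t0 Tstar : ℝ} {N : ℕ}

theorem Tgrid_mem_Icc (h : t0 ≤ Tstar) (hN : 0 < N) {i : ℕ} (hi : i ≤ N) :
    Tgrid t0 Tstar N i ∈ Icc t0 Tstar := by
  have hΔ : 0 ≤ (Tstar - t0) / N := div_nonneg (sub_nonneg.2 h) N.cast_nonneg
  have hiN : (i : ℝ) * ((Tstar - t0) / N) ≤ N * ((Tstar - t0) / N) := by gcongr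
  rw [mul_div_cancel₀ _ (by positivity)] at hiN
  exact ⟨le_add_of_nonneg_right (by positivity), by unfold Tgrid; linarith⟩

theorem ellIdx_monotone (h : t0 ≤ Tstar) : Monotone (ellIdx t0 Tstar N) := fun _ _ hss' =>
  Nat.floor_mono (div_le_div_of_nonneg_right (sub_le_sub_right hss' t0)
    (div_nonneg (sub_nonneg.2 h) N.cast_nonneg))

theorem ellIdx_add_le (h : t0 ≤ Tstar) {s tstar : ℝ} (hs : s ≤ tstar) {θ i : ℕ} (hi : i ≤ θ)
    (hθ : ellIdx t0 Tstar N tstar + θ ≤ N) : ellIdx t0 Tstar N s + i ≤ N := by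
  have := ellIdx_monotone (N := N) h hs
  omega

theorem measurable_ellIdx : Measurable (ellIdx t0 Tstar N) :=
  ((measurable_id.sub_const t0).div_const _).nat_floor

theorem card_Icc_mul_le (h : t0 ≤ Tstar) (hN : 0 < N) {a b : ℕ} (hb : b ≤ N) :
    ((Finset.Icc a b).card : ℝ) * ((Tstar - t0) / N) ≤ 2 * (Tstar - t0) := by
  have hcard : ((Finset.Icc a b).card : ℝ) ≤ 2 * N := by
    rw [Nat.card_Icc]
    exact_mod_cast (by omega : b + 1 - a ≤ 2 * N)
  calc ((Finset.Icc a b).card : ℝ) * ((Tstar - t0) / N) ≤ 2 * N * ((Tstar - t0) / N) := by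
        gcongr
    _ = 2 * (Tstar - t0) := by field_simp

theorem abs_gridQuadrature_le (h : t0 ≤ Tstar) (hN : 0 < N) {a b : ℕ} (hb : b ≤ N)
    {w x : ℕ → ℝ} {W X : ℝ} (hW : 0 ≤ W) (hX : 0 ≤ X)
    (hw : ∀ k ∈ Finset.Icc a b, |w k| ≤ W) (hx : ∀ k ∈ Finset.Icc a b, |x k| ≤ X) :
    |(Tstar - t0) / N * ∑ k ∈ Finset.Icc a b, w k * x k| ≤ 2 * (Tstar - t0) * (W * X) := by
  rw [abs_mul, abs_of_nonneg (div_nonneg (sub_nonneg.2 h) N.cast_nonneg)]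
  calc (Tstar - t0) / N * |∑ k ∈ Finset.Icc a b, w k * x k|
      ≤ (Tstar - t0) / N * ((Finset.Icc a b).card * (W * X)) := by
        gcongr
        exact abs_sum_mul_le_card_mul _ hw hx
    _ = (Finset.Icc a b).card * ((Tstar - t0) / N) * (W * X) := by ring
    _ ≤ 2 * (Tstar - t0) * (W * X) :=
      mul_le_mul_of_nonneg_right (card_Icc_mul_le h hN hb) (mul_nonneg hW hX)

theorem abs_sub_gridQuadrature_le (h : t0 ≤ Tstar) (hN : 0 < N) {a b : ℕ} (hb : b ≤ N)
    {w x x' : ℕ → ℝ} {W e η Z : ℝ} (hW : 0 ≤ W) (he : 0 ≤ e)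
    (hw : ∀ k ∈ Finset.Icc a b, |w k| ≤ W) (hx : ∀ k ∈ Finset.Icc a b, |x k - x' k| ≤ e)
    (hZ : |(Tstar - t0) / N * ∑ k ∈ Finset.Icc a b, w k * x k - Z| ≤ η) :
    |Z - (Tstar - t0) / N * ∑ k ∈ Finset.Icc a b, w k * x' k|
      ≤ η + 2 * (Tstar - t0) * (W * e) := by
  have hdiff := abs_gridQuadrature_le h hN hb hW he hw hx
  simp_rw [mul_sub (w _), Finset.sum_sub_distrib, mul_sub ((Tstar - t0) / N)] at hdiff
  calc _ ≤ |Z - _| + _ := abs_sub_le _ _ _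
    _ ≤ _ := add_le_add (abs_sub_comm Z _ ▸ hZ) hdiff

end Grid

/-- The HJM drift `σ(s,T)ᵀ ∫_s^T σ(s,u) du` along the forward curve `f`. -/
noncomputable def hjmDrift {d : ℕ} (σ : Fin d → ℝ → ℝ → ℝ → ℝ) (f : ℝ → ℝ → ℝ) (s T : ℝ) : ℝ :=
  ∑ j : Fin d, σ j s T (f s T) * ∫ u in s..T, σ j s u (f s u)

/-- The drift `σ(s,T_i)ᵀ S̃_I(s,T_i)` of the maturity-discretized system, evaluated along a family
`g k` of functions attached to the grid nodes `T_k`. -/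
noncomputable def discreteDrift {d : ℕ} (t0 Tstar : ℝ) (N : ℕ) (σ : Fin d → ℝ → ℝ → ℝ → ℝ)
    (γ : ℕ → ℝ → ℝ) (κ : ℝ → ℕ → ℕ) (g : ℕ → ℝ → ℝ) (i : ℕ) (s : ℝ) : ℝ :=
  ∑ j : Fin d, σ j s (Tgrid t0 Tstar N i) (g i s) * ((Tstar - t0) / N *
    ∑ k ∈ Finset.Icc (ellIdx t0 Tstar N s) (κ s i), γ k s * σ j s (Tgrid t0 Tstar N k) (g k s))

section Drift

variable {t0 Tstar C L Γ : ℝ} {d N : ℕ} {σ : Fin d → ℝ → ℝ → ℝ → ℝ} {γ : ℕ → ℝ → ℝ}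
  {κ : ℝ → ℕ → ℕ}

theorem abs_hjmDrift_le (hC : 0 ≤ C) (hσ : ∀ j t T z, |σ j t T z| ≤ C) (f : ℝ → ℝ → ℝ)
    {s T : ℝ} (hs : s ∈ Icc t0 Tstar) (hT : T ∈ Icc t0 Tstar) :
    |hjmDrift σ f s T| ≤ d * (C * (C * (Tstar - t0))) := by
  refine (abs_sum_mul_le_card_mul Finset.univ (B := C * (Tstar - t0))
    (fun j _ => hσ j s T (f s T)) fun j _ => ?_).trans_eq (by simp)
  have hint := norm_integral_le_of_norm_le_const (a := s) (b := T) fun u _ =>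
    (Real.norm_eq_abs _).trans_le (hσ j s u (f s u))
  rw [Real.norm_eq_abs] at hint
  refine hint.trans (mul_le_mul_of_nonneg_left (abs_sub_le_iff.2 ⟨?_, ?_⟩) hC) <;>
    linarith [hT.1, hT.2, hs.1, hs.2]

theorem abs_discreteDrift_le (h : t0 ≤ Tstar) (hN : 0 < N) (hC : 0 ≤ C) (hΓ : 0 ≤ Γ)
    (hσ : ∀ j t T z, |σ j t T z| ≤ C) (hγ : ∀ k s, |γ k s| ≤ Γ) {i : ℕ} {s : ℝ}
    (hκ : κ s i ≤ N) (g : ℕ → ℝ → ℝ) :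
    |discreteDrift t0 Tstar N σ γ κ g i s| ≤ d * (C * (2 * (Tstar - t0) * (Γ * C))) := by
  unfold discreteDrift
  refine (abs_sum_mul_le_card_mul Finset.univ (B := 2 * (Tstar - t0) * (Γ * C))
    (fun j _ => hσ j _ _ _) fun j _ => ?_).trans_eq (by simp)
  exact abs_gridQuadrature_le h hN hκ hΓ hC (fun k _ => hγ k s) fun k _ => hσ j _ _ _

theorem abs_hjmDrift_sub_discreteDrift_le (hσ : ∀ j t T z, |σ j t T z| ≤ C)
    {f : ℝ → ℝ → ℝ} {i : ℕ} {s ε : ℝ}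
    (hquad : ∀ j, |(Tstar - t0) / N * ∑ k ∈ Finset.Icc (ellIdx t0 Tstar N s) (κ s i),
        γ k s * σ j s (Tgrid t0 Tstar N k) (f s (Tgrid t0 Tstar N k)) -
      ∫ u in s..(Tgrid t0 Tstar N i), σ j s u (f s u)| ≤ ε) :
    |hjmDrift σ f s (Tgrid t0 Tstar N i) -
        discreteDrift t0 Tstar N σ γ κ (fun k s => f s (Tgrid t0 Tstar N k)) i s|
      ≤ d * (C * ε) := by
  unfold hjmDrift discreteDrift
  rw [← Finset.sum_sub_distrib]
  simp_rw [← mul_sub]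
  refine (abs_sum_mul_le_card_mul Finset.univ (B := ε) (fun j _ => hσ j _ _ _)
    fun j _ => ?_).trans_eq (by simp)
  rw [abs_sub_comm]
  exact hquad j

theorem abs_discreteDrift_sub_discreteDrift_le (h : t0 ≤ Tstar) (hN : 0 < N) (hC : 0 ≤ C)
    (hL : 0 ≤ L) (hΓ : 0 ≤ Γ) (hσ : ∀ j t T z, |σ j t T z| ≤ C)
    (hσL : ∀ j t T z z', |σ j t T z - σ j t T z'| ≤ L * |z - z'|) (hγ : ∀ k s, |γ k s| ≤ Γ)
    {i : ℕ} {s δ : ℝ} (hi : i ≤ N) (hκ : κ s i ≤ N) {g g' : ℕ → ℝ → ℝ}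
    (hg : ∀ k ≤ N, |g k s - g' k s| ≤ δ) :
    |discreteDrift t0 Tstar N σ γ κ g i s - discreteDrift t0 Tstar N σ γ κ g' i s|
      ≤ d * (4 * (Tstar - t0) * Γ * C * L * δ) := by
  have hδ : 0 ≤ δ := (abs_nonneg _).trans (hg i hi)
  have hσg : ∀ j k, k ≤ N → |σ j s (Tgrid t0 Tstar N k) (g k s) -
      σ j s (Tgrid t0 Tstar N k) (g' k s)| ≤ L * δ := fun j k hk =>
    (hσL _ _ _ _ _).trans (mul_le_mul_of_nonneg_left (hg k hk) hL)
  unfold discreteDrift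
  rw [← Finset.sum_sub_distrib]
  refine (abs_sum_le_card_mul Finset.univ (B := 4 * (Tstar - t0) * Γ * C * L * δ)
    fun j _ => ?_).trans_eq (by simp)
  refine (abs_mul_sub_mul_le _ _ _ _).trans ?_
  have hQ := abs_gridQuadrature_le (a := ellIdx t0 Tstar N s) h hN hκ hΓ hC
    (fun k _ => hγ k s) fun k _ => hσ j s (Tgrid t0 Tstar N k) (g k s)
  have hQQ := abs_gridQuadrature_le (a := ellIdx t0 Tstar N s) h hN hκ hΓ (mul_nonneg hL hδ)
    (fun k _ => hγ k s) fun k hk => hσg j k ((Finset.mem_Icc.1 hk).2.trans hκ)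
  simp_rw [mul_sub (γ _ s), Finset.sum_sub_distrib, mul_sub ((Tstar - t0) / N)] at hQQ
  calc _ ≤ L * δ * (2 * (Tstar - t0) * (Γ * C)) + C * (2 * (Tstar - t0) * (Γ * (L * δ))) := by
        gcongr
        exacts [hσg j i hi, hσ _ _ _ _]
    _ = 4 * (Tstar - t0) * Γ * C * L * δ := by ring

end Drift

section Integrability

variable {t0 tstar Tstar C Γ : ℝ} {d N : ℕ} {σ : Fin d → ℝ → ℝ → ℝ → ℝ} {γ : ℕ → ℝ → ℝ}
  {κ : ℝ → ℕ → ℕ}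

theorem measurable_hjmDrift (hσm : ∀ j, Measurable fun q : ℝ × ℝ × ℝ => σ j q.1 q.2.1 q.2.2)
    {f : ℝ → ℝ → ℝ} (hf : Measurable (Function.uncurry f)) (T : ℝ) :
    Measurable fun s => hjmDrift σ f s T :=
  Finset.measurable_sum _ fun j _ =>
    ((hσm j).comp (measurable_id.prodMk (measurable_const.prodMk
      (hf.comp (measurable_id.prodMk measurable_const))))).mul
    (measurable_intervalIntegral_of_measurable_uncurry (F := fun s u => σ j s u (f s u))
      ((hσm j).comp (measurable_fst.prodMk (measurable_snd.prodMk hf))) T)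

theorem measurable_discreteDrift (hσm : ∀ j, Measurable fun q : ℝ × ℝ × ℝ => σ j q.1 q.2.1 q.2.2)
    (hγm : ∀ k, Measurable (γ k)) (hκm : ∀ i, Measurable fun s => κ s i) {g : ℕ → ℝ → ℝ}
    (hg : ∀ k, Measurable (g k)) (i : ℕ) :
    Measurable (discreteDrift t0 Tstar N σ γ κ g i) := by
  have hσg : ∀ j k, Measurable fun s => σ j s (Tgrid t0 Tstar N k) (g k s) := fun j k =>
    (hσm j).comp (measurable_id.prodMk (measurable_const.prodMk (hg k)))
  refine Finset.measurable_sum _ fun j _ => (hσg j i).mul (measurable_const.mul ?_)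
  exact measurable_apply_of_measurable_index
    (φ := fun (ab : ℕ × ℕ) s =>
      ∑ k ∈ Finset.Icc ab.1 ab.2, γ k s * σ j s (Tgrid t0 Tstar N k) (g k s))
    (fun ab => Finset.measurable_sum _ fun k _ => (hγm k).mul (hσg j k))
    (measurable_ellIdx.prodMk (hκm i))

theorem intervalIntegrable_hjmDrift (h1 : t0 ≤ tstar) (h2 : tstar ≤ Tstar) (hC : 0 ≤ C)
    (hσm : ∀ j, Measurable fun q : ℝ × ℝ × ℝ => σ j q.1 q.2.1 q.2.2)
    (hσ : ∀ j t T z, |σ j t T z| ≤ C) {f : ℝ → ℝ → ℝ}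
    (hf : ContinuousOn (Function.uncurry f) (Icc t0 tstar ×ˢ Icc t0 Tstar)) {T : ℝ}
    (hT : T ∈ Icc t0 Tstar) :
    IntervalIntegrable (fun s => hjmDrift σ f s T) volume t0 tstar := by
  have h : t0 ≤ Tstar := h1.trans h2
  -- a continuous extension of `f` to the whole plane makes the drift measurable
  set F : ℝ → ℝ → ℝ := fun s u => f (projIcc t0 tstar h1 s) (projIcc t0 Tstar h u)
  have hp1 : Continuous fun s => (projIcc t0 tstar h1 s : ℝ) :=
    continuous_subtype_val.comp continuous_projIcc
  have hp2 : Continuous fun u => (projIcc t0 Tstar h u : ℝ) :=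
    continuous_subtype_val.comp continuous_projIcc
  have hF : Continuous (Function.uncurry F) :=
    hf.comp_continuous ((hp1.comp continuous_fst).prodMk (hp2.comp continuous_snd))
      fun q => ⟨(projIcc t0 tstar h1 q.1).2, (projIcc t0 Tstar h q.2).2⟩
  refine intervalIntegrable_of_eqOn_measurable (B := d * (C * (C * (Tstar - t0))))
    (measurable_hjmDrift hσm hF.measurable T) (fun s hs => ?_) fun s hs => ?_ <;>
    rw [uIcc_of_le h1] at hs
  · have hFf : ∀ u ∈ Icc t0 Tstar, F s u = f s u := fun u hu => by
      simp only [F, projIcc_of_mem _ hs, projIcc_of_mem _ hu]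
    have hsT : s ∈ Icc t0 Tstar := ⟨hs.1, hs.2.trans h2⟩
    refine Finset.sum_congr rfl fun j _ => ?_
    rw [hFf T hT, integral_congr fun u hu => ?_]
    rw [hFf u (uIcc_subset_Icc hsT hT hu)]
  · exact abs_hjmDrift_le hC hσ f ⟨hs.1, hs.2.trans h2⟩ hT

theorem exists_continuous_eqOn_Icc {a b : ℝ} (hab : a ≤ b) {N : ℕ} {g : ℕ → ℝ → ℝ}
    (hg : ∀ k ≤ N, ContinuousOn (g k) (Icc a b)) :
    ∃ G : ℕ → ℝ → ℝ, (∀ k, Continuous (G k)) ∧ ∀ k ≤ N, EqOn (G k) (g k) (Icc a b) :=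
  ⟨fun k => IccExtend hab ((Icc a b).domRestrict (g (min k N))),
    fun k => continuous_IccExtend_iff.2 (hg _ (min_le_right _ _)).domRestrict,
    fun k hk s hs => by simp [IccExtend_of_mem hab _ hs, min_eq_left hk]⟩

theorem intervalIntegrable_discreteDrift (h1 : t0 ≤ tstar) (h2 : tstar ≤ Tstar) (hN : 0 < N)
    (hC : 0 ≤ C) (hΓ : 0 ≤ Γ) (hσm : ∀ j, Measurable fun q : ℝ × ℝ × ℝ => σ j q.1 q.2.1 q.2.2)
    (hσ : ∀ j t T z, |σ j t T z| ≤ C) (hγm : ∀ k, Measurable (γ k)) (hγ : ∀ k s, |γ k s| ≤ Γ)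
    (hκm : ∀ i, Measurable fun s => κ s i) (hκ : ∀ s ∈ Icc t0 tstar, ∀ i ≤ N, κ s i ≤ N)
    {g : ℕ → ℝ → ℝ} (hg : ∀ k ≤ N, ContinuousOn (g k) (Icc t0 tstar)) {i : ℕ} (hi : i ≤ N) :
    IntervalIntegrable (discreteDrift t0 Tstar N σ γ κ g i) volume t0 tstar := by
  obtain ⟨G, hGc, hGg⟩ := exists_continuous_eqOn_Icc h1 hg
  refine intervalIntegrable_of_eqOn_measurable (B := d * (C * (2 * (Tstar - t0) * (Γ * C))))
    (measurable_discreteDrift (t0 := t0) (Tstar := Tstar) (N := N) hσm hγm hκm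
      (fun k => (hGc k).measurable) i) (fun s hs => ?_)
    fun s hs => ?_ <;> rw [uIcc_of_le h1] at hs
  · refine Finset.sum_congr rfl fun j _ => ?_
    rw [hGg i hi hs]
    congr 2
    refine Finset.sum_congr rfl fun k hk => ?_
    rw [hGg k ((Finset.mem_Icc.1 hk).2.trans (hκ s hs i hi)) hs]
  · exact abs_discreteDrift_le (h1.trans h2) hN hC hΓ hσ hγ (hκ s hs i hi) g

end Integrability

/-- The largest error `maxᵢ |f(t, Tᵢ) - f̃ⁱ(t)|` over the grid nodes `i ≤ N`, written as the sup
norm on `Fin (N + 1) → ℝ`. -/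
noncomputable def nodalError (t0 Tstar : ℝ) (N : ℕ) (f : ℝ → ℝ → ℝ) (ftil : ℕ → ℝ → ℝ) (t : ℝ) :
    ℝ :=
  ‖fun i : Fin (N + 1) => f t (Tgrid t0 Tstar N i) - ftil i t‖

section Error

variable {t0 tstar Tstar C L Γ : ℝ} {d N : ℕ} {σ : Fin d → ℝ → ℝ → ℝ → ℝ} {γ : ℕ → ℝ → ℝ}
  {κ : ℝ → ℕ → ℕ}

theorem abs_hjmSolution_le (h2 : tstar ≤ Tstar) (hC : 0 ≤ C) (hσ : ∀ j t T z, |σ j t T z| ≤ C)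
    {C0 : ℝ} {f0 : ℝ → ℝ} (hf0 : ∀ T ∈ Icc t0 Tstar, |f0 T| ≤ C0) {f : ℝ → ℝ → ℝ}
    (hf : ∀ t ∈ Icc t0 tstar, ∀ T ∈ Icc t0 Tstar,
      f t T = f0 T + ∫ s in t0..t, hjmDrift σ f s T) :
    ∀ t ∈ Icc t0 tstar, ∀ T ∈ Icc t0 Tstar,
      |f t T| ≤ C0 + (tstar - t0) * (d * (C * (C * (Tstar - t0)))) := fun t ht T hT =>
  abs_le_add_mul_of_eq_add_integral (x := fun t => f t T) (fun t ht => hf t ht T hT) (hf0 T hT)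
    (fun _ hs => abs_hjmDrift_le hC hσ f ⟨hs.1, hs.2.trans h2⟩ hT) t ht

theorem abs_discretizedSolution_le (h : t0 ≤ Tstar) (hN : 0 < N) (hC : 0 ≤ C) (hΓ : 0 ≤ Γ)
    (hσ : ∀ j t T z, |σ j t T z| ≤ C) (hγ : ∀ k s, |γ k s| ≤ Γ)
    (hκ : ∀ s ∈ Icc t0 tstar, ∀ i ≤ N, κ s i ≤ N) {C0 : ℝ} {f0 : ℝ → ℝ}
    (hf0 : ∀ T ∈ Icc t0 Tstar, |f0 T| ≤ C0) {ftil : ℕ → ℝ → ℝ}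
    (hft : ∀ i ≤ N, ∀ t ∈ Icc t0 tstar, ftil i t =
      f0 (Tgrid t0 Tstar N i) + ∫ s in t0..t, discreteDrift t0 Tstar N σ γ κ ftil i s) :
    ∀ i ≤ N, ∀ t ∈ Icc t0 tstar,
      |ftil i t| ≤ C0 + (tstar - t0) * (d * (C * (2 * (Tstar - t0) * (Γ * C)))) :=
  fun i hi t ht => abs_le_add_mul_of_eq_add_integral (hft i hi) (hf0 _ (Tgrid_mem_Icc h hN hi))
    (fun s hs => abs_discreteDrift_le h hN hC hΓ hσ hγ (hκ s hs i hi) ftil) t ht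

theorem abs_interp_le (h : t0 ≤ Tstar) {θ : ℕ} (hθ : ellIdx t0 Tstar N tstar + θ ≤ N)
    {Λ M : ℝ} {lam : ℕ → ℝ → ℝ} (hlam : ∀ i ≤ θ, ∀ t, |lam i t| ≤ Λ) {ftil : ℕ → ℝ → ℝ}
    (hftM : ∀ i ≤ N, ∀ t ∈ Icc t0 tstar, |ftil i t| ≤ M) {s : ℝ} (hs : s ∈ Icc t0 tstar) :
    |∑ i ∈ Finset.range (θ + 1), lam i s * ftil (ellIdx t0 Tstar N s + i) s|
      ≤ (θ + 1) * (Λ * M) :=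
  (abs_sum_mul_le_card_mul _ (fun i hi => hlam i (Finset.mem_range_succ_iff.1 hi) s)
    fun i hi => hftM _ (ellIdx_add_le h hs.2 (Finset.mem_range_succ_iff.1 hi) hθ) s hs).trans_eq
    (by simp)

theorem abs_sub_le_nodalError (f : ℝ → ℝ → ℝ) (ftil : ℕ → ℝ → ℝ) {i : ℕ} (hi : i ≤ N) (t : ℝ) :
    |f t (Tgrid t0 Tstar N i) - ftil i t| ≤ nodalError t0 Tstar N f ftil t :=
  norm_le_pi_norm (fun i : Fin (N + 1) => f t (Tgrid t0 Tstar N i) - ftil i t)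
    ⟨i, Nat.lt_succ_of_le hi⟩

theorem continuousOn_nodalError (h1 : t0 ≤ tstar) (h2 : tstar ≤ Tstar) (hN : 0 < N)
    {f : ℝ → ℝ → ℝ} (hfc : ContinuousOn (Function.uncurry f) (Icc t0 tstar ×ˢ Icc t0 Tstar))
    {ftil : ℕ → ℝ → ℝ} (hftc : ∀ i ≤ N, ContinuousOn (ftil i) (Icc t0 tstar)) :
    ContinuousOn (nodalError t0 Tstar N f ftil) (Icc t0 tstar) :=
  continuous_norm.comp_continuousOn <| continuousOn_pi.2 fun i =>
    (hfc.comp (continuousOn_id.prodMk continuousOn_const) fun _ hs =>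
      ⟨hs, Tgrid_mem_Icc (h1.trans h2) hN (Nat.lt_succ_iff.1 i.2)⟩).sub
    (hftc i (Nat.lt_succ_iff.1 i.2))

theorem nodalError_le_add_mul_integral (h1 : t0 ≤ tstar) (h2 : tstar ≤ Tstar) (hN : 0 < N)
    (hC : 0 ≤ C) (hL : 0 ≤ L) (hΓ : 0 ≤ Γ)
    (hσm : ∀ j, Measurable fun q : ℝ × ℝ × ℝ => σ j q.1 q.2.1 q.2.2)
    (hσ : ∀ j t T z, |σ j t T z| ≤ C)
    (hσL : ∀ j t T z z', |σ j t T z - σ j t T z'| ≤ L * |z - z'|)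
    (hγm : ∀ k, Measurable (γ k)) (hγ : ∀ k s, |γ k s| ≤ Γ)
    (hκm : ∀ i, Measurable fun s => κ s i) (hκ : ∀ s ∈ Icc t0 tstar, ∀ i ≤ N, κ s i ≤ N)
    {f0 : ℝ → ℝ} {f : ℝ → ℝ → ℝ}
    (hfc : ContinuousOn (Function.uncurry f) (Icc t0 tstar ×ˢ Icc t0 Tstar))
    (hf : ∀ t ∈ Icc t0 tstar, ∀ i ≤ N, f t (Tgrid t0 Tstar N i) =
      f0 (Tgrid t0 Tstar N i) + ∫ s in t0..t, hjmDrift σ f s (Tgrid t0 Tstar N i))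
    {ftil : ℕ → ℝ → ℝ} (hftc : ∀ i ≤ N, ContinuousOn (ftil i) (Icc t0 tstar))
    (hft : ∀ i ≤ N, ∀ t ∈ Icc t0 tstar, ftil i t =
      f0 (Tgrid t0 Tstar N i) + ∫ s in t0..t, discreteDrift t0 Tstar N σ γ κ ftil i s)
    {ε : ℝ} (hε : 0 ≤ ε)
    (hquad : ∀ s ∈ Icc t0 tstar, ∀ i ≤ N, ∀ j,
      |(Tstar - t0) / N * ∑ k ∈ Finset.Icc (ellIdx t0 Tstar N s) (κ s i),
          γ k s * σ j s (Tgrid t0 Tstar N k) (f s (Tgrid t0 Tstar N k)) -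
        ∫ u in s..(Tgrid t0 Tstar N i), σ j s u (f s u)| ≤ ε) :
    ∀ t ∈ Icc t0 tstar, nodalError t0 Tstar N f ftil t ≤ d * C * ε * (tstar - t0) +
      4 * d * (Tstar - t0) * Γ * C * L * ∫ s in t0..t, nodalError t0 Tstar N f ftil s := by
  have h : t0 ≤ Tstar := h1.trans h2
  set u := nodalError t0 Tstar N f ftil
  set a := 4 * d * (Tstar - t0) * Γ * C * L
  have hdrift : ∀ s ∈ Icc t0 tstar, ∀ i ≤ N, |hjmDrift σ f s (Tgrid t0 Tstar N i) -
      discreteDrift t0 Tstar N σ γ κ ftil i s| ≤ d * (C * ε) + a * u s := fun s hs i hi =>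
    (abs_sub_le _ (discreteDrift t0 Tstar N σ γ κ (fun k s => f s (Tgrid t0 Tstar N k)) i s)
      _).trans (add_le_add (abs_hjmDrift_sub_discreteDrift_le hσ (hquad s hs i hi))
        ((abs_discreteDrift_sub_discreteDrift_le h hN hC hL hΓ hσ hσL hγ hi (hκ s hs i hi)
          fun k hk => abs_sub_le_nodalError f ftil hk s).trans_eq (by ring)))
  intro t ht
  have hsub : uIcc t0 t ⊆ uIcc t0 tstar := by
    rw [uIcc_of_le ht.1, uIcc_of_le h1]
    exact Icc_subset_Icc_right ht.2
  have huint : IntervalIntegrable u volume t0 t :=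
    ((continuousOn_nodalError h1 h2 hN hfc hftc).mono
      (by rwa [uIcc_of_le h1] at hsub)).intervalIntegrable
  refine (pi_norm_le_iff_of_nonneg (add_nonneg (by positivity)
    (mul_nonneg (by positivity) (integral_nonneg ht.1 fun s _ => norm_nonneg _)))).2 fun i => ?_
  have hi : (i : ℕ) ≤ N := Nat.lt_succ_iff.1 i.2
  rw [Real.norm_eq_abs, hf t ht i hi, hft i hi t ht, add_sub_add_left_eq_sub]
  calc _ ≤ ∫ s in t0..t, (d * (C * ε) + a * u s) :=
        abs_integral_sub_integral_le ht.1
          ((intervalIntegrable_hjmDrift h1 h2 hC hσm hσ hfc (Tgrid_mem_Icc h hN hi)).mono_set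
            hsub)
          ((intervalIntegrable_discreteDrift h1 h2 hN hC hΓ hσm hσ hγm hγ hκm hκ hftc
            hi).mono_set hsub)
          (intervalIntegrable_const.add (huint.const_mul a))
          fun s hs => hdrift s ⟨hs.1, hs.2.trans ht.2⟩ i hi
    _ = d * C * ε * (t - t0) + a * ∫ s in t0..t, u s := by
        rw [integral_add intervalIntegrable_const (huint.const_mul a),
          intervalIntegral.integral_const, intervalIntegral.integral_const_mul, smul_eq_mul]
        ring
    _ ≤ d * C * ε * (tstar - t0) + a * ∫ s in t0..t, u s := by gcongr; exact ht.2

theorem abs_hjmSolution_sub_discretizedSolution_le (h1 : t0 ≤ tstar) (h2 : tstar ≤ Tstar)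
    (hN : 0 < N) (hC : 0 ≤ C) (hL : 0 ≤ L) (hΓ : 0 ≤ Γ)
    (hσm : ∀ j, Measurable fun q : ℝ × ℝ × ℝ => σ j q.1 q.2.1 q.2.2)
    (hσ : ∀ j t T z, |σ j t T z| ≤ C)
    (hσL : ∀ j t T z z', |σ j t T z - σ j t T z'| ≤ L * |z - z'|)
    (hγm : ∀ k, Measurable (γ k)) (hγ : ∀ k s, |γ k s| ≤ Γ)
    (hκm : ∀ i, Measurable fun s => κ s i) (hκ : ∀ s ∈ Icc t0 tstar, ∀ i ≤ N, κ s i ≤ N)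
    {f0 : ℝ → ℝ} {f : ℝ → ℝ → ℝ}
    (hfc : ContinuousOn (Function.uncurry f) (Icc t0 tstar ×ˢ Icc t0 Tstar))
    (hf : ∀ t ∈ Icc t0 tstar, ∀ i ≤ N, f t (Tgrid t0 Tstar N i) =
      f0 (Tgrid t0 Tstar N i) + ∫ s in t0..t, hjmDrift σ f s (Tgrid t0 Tstar N i))
    {ftil : ℕ → ℝ → ℝ} (hftc : ∀ i ≤ N, ContinuousOn (ftil i) (Icc t0 tstar))
    (hft : ∀ i ≤ N, ∀ t ∈ Icc t0 tstar, ftil i t =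
      f0 (Tgrid t0 Tstar N i) + ∫ s in t0..t, discreteDrift t0 Tstar N σ γ κ ftil i s)
    {ε : ℝ} (hε : 0 ≤ ε)
    (hquad : ∀ s ∈ Icc t0 tstar, ∀ i ≤ N, ∀ j,
      |(Tstar - t0) / N * ∑ k ∈ Finset.Icc (ellIdx t0 Tstar N s) (κ s i),
          γ k s * σ j s (Tgrid t0 Tstar N k) (f s (Tgrid t0 Tstar N k)) -
        ∫ u in s..(Tgrid t0 Tstar N i), σ j s u (f s u)| ≤ ε) :
    ∀ t ∈ Icc t0 tstar, ∀ i ≤ N, |f t (Tgrid t0 Tstar N i) - ftil i t|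
      ≤ d * C * ε * (tstar - t0) *
        Real.exp (4 * d * (Tstar - t0) * Γ * C * L * (tstar - t0)) := by
  have h : t0 ≤ Tstar := h1.trans h2
  intro t ht i hi
  calc _ ≤ nodalError t0 Tstar N f ftil t := abs_sub_le_nodalError f ftil hi t
    _ ≤ d * C * ε * (tstar - t0) * Real.exp (4 * d * (Tstar - t0) * Γ * C * L * (t - t0)) :=
      le_mul_exp_of_le_add_mul_integral h1 (by positivity)
        (continuousOn_nodalError h1 h2 hN hfc hftc) (fun t _ => norm_nonneg _)
        (nodalError_le_add_mul_integral h1 h2 hN hC hL hΓ hσm hσ hσL hγm hγ hκm hκ hfc hf hftc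
          hft hε hquad) t ht
    _ ≤ _ := by gcongr; exact ht.2

theorem abs_integral_diag_sub_integral_interp_le (h1 : t0 ≤ tstar) (h2 : tstar ≤ Tstar)
    {θ : ℕ} (hθ : ellIdx t0 Tstar N tstar + θ ≤ N) {Λ M η e : ℝ} {lam : ℕ → ℝ → ℝ}
    (hlamm : ∀ i ≤ θ, Measurable (lam i)) (hlam : ∀ i ≤ θ, ∀ t, |lam i t| ≤ Λ)
    {f : ℝ → ℝ → ℝ} (hfc : ContinuousOn (Function.uncurry f) (Icc t0 tstar ×ˢ Icc t0 Tstar))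
    {ftil : ℕ → ℝ → ℝ} (hftc : ∀ i ≤ N, ContinuousOn (ftil i) (Icc t0 tstar))
    (hftM : ∀ i ≤ N, ∀ t ∈ Icc t0 tstar, |ftil i t| ≤ M)
    (hη : ∀ t ∈ Icc t0 tstar, |f t t - ∑ i ∈ Finset.range (θ + 1),
      lam i t * f t (Tgrid t0 Tstar N (ellIdx t0 Tstar N t + i))| ≤ η)
    (he : ∀ t ∈ Icc t0 tstar, ∀ i ≤ N, |f t (Tgrid t0 Tstar N i) - ftil i t| ≤ e) :
    |(∫ s in t0..tstar, f s s) - ∫ s in t0..tstar, ∑ i ∈ Finset.range (θ + 1),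
        lam i s * ftil (ellIdx t0 Tstar N s + i) s|
      ≤ (tstar - t0) * (η + (θ + 1) * (Λ * e)) := by
  have hidx : ∀ s ∈ Icc t0 tstar, ∀ i ∈ Finset.range (θ + 1), ellIdx t0 Tstar N s + i ≤ N :=
    fun s hs i hi => ellIdx_add_le (h1.trans h2) hs.2 (Finset.mem_range_succ_iff.1 hi) hθ
  have hdiag : IntervalIntegrable (fun s => f s s) volume t0 tstar := by
    refine ContinuousOn.intervalIntegrable ?_
    rw [uIcc_of_le h1]
    exact hfc.comp (continuousOn_id.prodMk continuousOn_id) fun s hs => ⟨hs, hs.1, hs.2.trans h2⟩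
  obtain ⟨G, hGc, hGf⟩ := exists_continuous_eqOn_Icc h1 hftc
  have hinterp : IntervalIntegrable (fun s => ∑ i ∈ Finset.range (θ + 1),
      lam i s * ftil (ellIdx t0 Tstar N s + i) s) volume t0 tstar := by
    refine intervalIntegrable_of_eqOn_measurable (B := (θ + 1) * (Λ * M))
      (h := fun s => ∑ i ∈ Finset.range (θ + 1), lam i s * G (ellIdx t0 Tstar N s + i) s)
      (Finset.measurable_sum _ fun i hi => (hlamm i (Finset.mem_range_succ_iff.1 hi)).mul
        (measurable_apply_of_measurable_index (fun k => (hGc k).measurable)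
          (measurable_ellIdx.add_const i))) (fun s hs => ?_) fun s hs => ?_ <;>
      rw [uIcc_of_le h1] at hs
    · exact Finset.sum_congr rfl fun i hi => by rw [hGf _ (hidx s hs i hi) hs]
    · exact abs_interp_le (h1.trans h2) hθ hlam hftM hs
  refine (abs_integral_sub_integral_le h1 hdiag hinterp
    (intervalIntegrable_const (c := η + (θ + 1) * (Λ * e))) fun s hs => ?_).trans_eq
    (by rw [intervalIntegral.integral_const, smul_eq_mul])
  refine (abs_sub_le _ (∑ i ∈ Finset.range (θ + 1),
    lam i s * f s (Tgrid t0 Tstar N (ellIdx t0 Tstar N s + i))) _).trans (add_le_add (hη s hs) ?_)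
  rw [← Finset.sum_sub_distrib]
  simp_rw [← mul_sub]
  simpa using abs_sum_mul_le_card_mul _ (fun i hi => hlam i (Finset.mem_range_succ_iff.1 hi) s)
    fun i hi => he s hs _ (hidx s hs i hi)

end Error

theorem weak_T_discretization_price_error_order_p_general
    (t0 tstar Tstar : ℝ) (d : ℕ) (C L Γ Λ C0 C₁ p LG : ℝ) (θ : ℕ)
    (h1 : t0 < tstar) (h2 : tstar ≤ Tstar)
    (hC : 0 < C) (hL : 0 ≤ L) (hΓ : 0 ≤ Γ)
    (hC₁ : 0 < C₁) (hLG : 0 ≤ LG)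
    (G : ℝ → ℝ) (hGlip : ∀ z z', |G z - G z'| ≤ LG * |z - z'|) :
    ∃ K > 0,
      ∀ σ : Fin d → ℝ → ℝ → ℝ → ℝ,
        (∀ j, Measurable fun q : ℝ × ℝ × ℝ => σ j q.1 q.2.1 q.2.2) →
        (∀ j t T z, |σ j t T z| ≤ C) →
        (∀ j t T z z', |σ j t T z - σ j t T z'| ≤ L * |z - z'|) →
      ∀ f0 : ℝ → ℝ, ContinuousOn f0 (Set.Icc t0 Tstar) →
        (∀ T ∈ Set.Icc t0 Tstar, |f0 T| ≤ C0) →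
      ∀ f : ℝ → ℝ → ℝ,
        ContinuousOn (fun q : ℝ × ℝ => f q.1 q.2)
          (Set.Icc t0 tstar ×ˢ Set.Icc t0 Tstar) →
        (∀ t ∈ Set.Icc t0 tstar, ∀ T ∈ Set.Icc t0 Tstar,
          f t T = f0 T + ∫ s in t0..t, ∑ j : Fin d,
            σ j s T (f s T) * ∫ u in s..T, σ j s u (f s u)) →
      ∀ N : ℕ, 0 < N →
      ∀ γ : ℕ → ℝ → ℝ, (∀ k, Measurable (γ k)) → (∀ k s, |γ k s| ≤ Γ) →
      ∀ κ : ℝ → ℕ → ℕ, (∀ i, Measurable fun s => κ s i) →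
        (∀ s ∈ Set.Icc t0 tstar, ∀ i ≤ N,
          ellIdx t0 Tstar N s ≤ κ s i ∧ κ s i ≤ N) →
      ∀ ftil : ℕ → ℝ → ℝ,
        (∀ i ≤ N, ContinuousOn (ftil i) (Set.Icc t0 tstar)) →
        -- the maturity-discretized system of integral equations
        (∀ i ≤ N, ∀ t ∈ Set.Icc t0 tstar,
          ftil i t = f0 (Tgrid t0 Tstar N i) + ∫ s in t0..t, ∑ j : Fin d,
            σ j s (Tgrid t0 Tstar N i) (ftil i s) *
              (((Tstar - t0) / N) *
                ∑ k ∈ Finset.Icc (ellIdx t0 Tstar N s) (κ s i),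
                  γ k s * σ j s (Tgrid t0 Tstar N k) (ftil k s))) →
        -- (d) the drift quadrature has order `p` along the exact solution
        (∀ s ∈ Set.Icc t0 tstar, ∀ i ≤ N, ∀ j : Fin d,
          |((Tstar - t0) / N) *
              ∑ k ∈ Finset.Icc (ellIdx t0 Tstar N s) (κ s i),
                γ k s * σ j s (Tgrid t0 Tstar N k) (f s (Tgrid t0 Tstar N k)) -
            ∫ u in s..(Tgrid t0 Tstar N i), σ j s u (f s u)|
              ≤ C₁ * ((Tstar - t0) / N) ^ p) →
      -- (b) order-`p` short-rate approximation coefficients λ_i(t)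
      ellIdx t0 Tstar N tstar + θ ≤ N →
      ∀ lam : ℕ → ℝ → ℝ, (∀ i ≤ θ, Measurable (lam i)) →
        (∀ i ≤ θ, ∀ t, |lam i t| ≤ Λ) →
        (∀ t ∈ Set.Icc t0 tstar,
          |f t t - ∑ i ∈ Finset.range (θ + 1),
              lam i t * f t (Tgrid t0 Tstar N (ellIdx t0 Tstar N t + i))|
            ≤ C₁ * ((Tstar - t0) / N) ^ p) →
      -- (c) order-`p` bond-price quadrature weights γ̃_j
      ∀ γtil : ℕ → ℝ, (∀ j, |γtil j| ≤ Γ) →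
        (|((Tstar - t0) / N) *
            ∑ j ∈ Finset.Icc (ellIdx t0 Tstar N tstar + 1) N,
              γtil j * f tstar (Tgrid t0 Tstar N j) -
          ∫ u in tstar..Tstar, f tstar u| ≤ C₁ * ((Tstar - t0) / N) ^ p) →
      -- conclusion
      let Y : ℝ := ∫ s in t0..tstar, f s s
      let Z : ℝ := ∫ u in tstar..Tstar, f tstar u
      let Ytil : ℝ := ∫ s in t0..tstar, ∑ i ∈ Finset.range (θ + 1),
        lam i s * ftil (ellIdx t0 Tstar N s + i) s
      let SZtil : ℝ := ((Tstar - t0) / N) *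
        ∑ j ∈ Finset.Icc (ellIdx t0 Tstar N tstar + 1) N, γtil j * ftil j tstar
      |Real.exp (-Y) * G (Real.exp (-Z)) - Real.exp (-Ytil) * G (Real.exp (-SZtil))|
        ≤ K * ((Tstar - t0) / N) ^ p := by
  have h : t0 ≤ Tstar := h1.le.trans h2
  have htstar : tstar ∈ Icc t0 tstar := ⟨h1.le, le_rfl⟩
  set M := max (C0 + (tstar - t0) * (d * (C * (C * (Tstar - t0)))))
    (C0 + (tstar - t0) * (d * (C * (2 * (Tstar - t0) * (Γ * C)))))
  set MY := max ((tstar - t0) * M) ((tstar - t0) * ((θ + 1) * (Λ * M)))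
  set MZ := (Tstar - tstar) * M
  set MZ' := max MZ (2 * (Tstar - t0) * (Γ * M))
  set E := d * C * C₁ * (tstar - t0) * Real.exp (4 * d * (Tstar - t0) * Γ * C * L * (tstar - t0))
  set KY := (tstar - t0) * (C₁ + (θ + 1) * (Λ * E))
  set KZ := C₁ + 2 * (Tstar - t0) * (Γ * E)
  refine ⟨max 1 (Real.exp MY * ((|G 0| + LG * Real.exp MZ) * KY + LG * Real.exp MZ' * KZ)),
    by positivity, ?_⟩
  intro σ hσm hσ hσL f0 _ hf0 f hfc hf N hN γ hγm hγ κ hκm hκ ftil hftc hft hquad hθN lam hlamm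
    hlam hlama γtil hγtil hZq Y Z Ytil SZtil
  have hκN : ∀ s ∈ Icc t0 tstar, ∀ i ≤ N, κ s i ≤ N := fun s hs i hi => (hκ s hs i hi).2
  have hfM : ∀ t ∈ Icc t0 tstar, ∀ T ∈ Icc t0 Tstar, |f t T| ≤ M := fun t ht T hT =>
    (abs_hjmSolution_le h2 hC.le hσ hf0 hf t ht T hT).trans (le_max_left _ _)
  have hftM : ∀ i ≤ N, ∀ t ∈ Icc t0 tstar, |ftil i t| ≤ M := fun i hi t ht =>
    (abs_discretizedSolution_le h hN hC.le hΓ hσ hγ hκN hf0 hft i hi t ht).trans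
      (le_max_right _ _)
  have herr : ∀ t ∈ Icc t0 tstar, ∀ i ≤ N,
      |f t (Tgrid t0 Tstar N i) - ftil i t| ≤ E * ((Tstar - t0) / N) ^ p := fun t ht i hi =>
    (abs_hjmSolution_sub_discretizedSolution_le h1.le h2 hN hC.le hL hΓ hσm hσ hσL hγm hγ hκm
      hκN hfc (fun t ht i hi => hf t ht _ (Tgrid_mem_Icc h hN hi)) hftc hft (by positivity)
      hquad t ht i hi).trans_eq (by ring)
  have hY : |Y - Ytil| ≤ KY * ((Tstar - t0) / N) ^ p :=
    (abs_integral_diag_sub_integral_interp_le h1.le h2 hθN hlamm hlam hfc hftc hftM hlama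
      herr).trans_eq (by ring)
  have hZ : |Z - SZtil| ≤ KZ * ((Tstar - t0) / N) ^ p :=
    (abs_sub_gridQuadrature_le h hN le_rfl hΓ (by positivity) (fun j _ => hγtil j)
      (fun j hj => herr tstar htstar j (Finset.mem_Icc.1 hj).2) hZq).trans_eq (by ring)
  have hYb : |Y| ≤ (tstar - t0) * M :=
    abs_integral_le_mul_of_abs_le h1.le fun s hs => hfM s hs s ⟨hs.1, hs.2.trans h2⟩
  have hYtb : |Ytil| ≤ (tstar - t0) * ((θ + 1) * (Λ * M)) :=
    abs_integral_le_mul_of_abs_le h1.le fun s hs => abs_interp_le h hθN hlam hftM hs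
  have hZb : |Z| ≤ MZ :=
    abs_integral_le_mul_of_abs_le h2 fun u hu => hfM tstar htstar u ⟨h1.le.trans hu.1, hu.2⟩
  have hSZb : |SZtil| ≤ 2 * (Tstar - t0) * (Γ * M) :=
    abs_gridQuadrature_le h hN le_rfl hΓ ((abs_nonneg _).trans (hftM 0 hN.le t0 ⟨le_rfl, h1.le⟩))
      (fun j _ => hγtil j) fun j hj => hftM j (Finset.mem_Icc.1 hj).2 tstar htstar
  calc _ ≤ Real.exp MY * ((|G 0| + LG * Real.exp MZ) * |Y - Ytil|
        + LG * Real.exp MZ' * |Z - SZtil|) :=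
        abs_exp_neg_mul_sub_exp_neg_mul_le hLG hGlip hYb hYtb hZb hSZb
    _ ≤ Real.exp MY * ((|G 0| + LG * Real.exp MZ) * (KY * ((Tstar - t0) / N) ^ p)
        + LG * Real.exp MZ' * (KZ * ((Tstar - t0) / N) ^ p)) := by gcongr
    _ ≤ _ := (le_of_eq (by ring)).trans
      (mul_le_mul_of_nonneg_right (le_max_right _ _) (by positivity))

/-- Noise-free analogue of the paper's weak `T`-discretization error theorem: under
order-`p` quadratures for the drift, the short rate and the bond-price integral, the
approximate discounted payoff `e^{−Ỹ} G(e^{−S̃_Z})` deviates from the exact one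
`e^{−Y} G(e^{−Z})` by at most `K Δ^p`, with `K` depending only on
`C, L, Γ, Λ, θ, C0, C₁, d, t* − t0, T* − t0`, the Lipschitz constant of `G` and `|G 0|`. -/
theorem weak_T_discretization_price_error_order_p
    (t0 tstar Tstar : ℝ) (d : ℕ) (C L Γ Λ C0 C₁ p LG : ℝ) (θ : ℕ)
    (h1 : t0 < tstar) (h2 : tstar ≤ Tstar) (hd : 1 ≤ d)
    (hC : 0 < C) (hL : 0 ≤ L) (hΓ : 0 ≤ Γ) (hΛ : 0 ≤ Λ) (hC0 : 0 ≤ C0)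
    (hC₁ : 0 < C₁) (hp : 0 < p) (hLG : 0 ≤ LG)
    (G : ℝ → ℝ) (hGlip : ∀ z z', |G z - G z'| ≤ LG * |z - z'|) :
    ∃ K > 0,
      ∀ σ : Fin d → ℝ → ℝ → ℝ → ℝ,
        (∀ j, Measurable fun q : ℝ × ℝ × ℝ => σ j q.1 q.2.1 q.2.2) →
        (∀ j t T z, |σ j t T z| ≤ C) →
        (∀ j t T z z', |σ j t T z - σ j t T z'| ≤ L * |z - z'|) →
      ∀ f0 : ℝ → ℝ, ContinuousOn f0 (Set.Icc t0 Tstar) →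
        (∀ T ∈ Set.Icc t0 Tstar, |f0 T| ≤ C0) →
      ∀ f : ℝ → ℝ → ℝ,
        ContinuousOn (fun q : ℝ × ℝ => f q.1 q.2)
          (Set.Icc t0 tstar ×ˢ Set.Icc t0 Tstar) →
        (∀ t ∈ Set.Icc t0 tstar, ∀ T ∈ Set.Icc t0 Tstar,
          f t T = f0 T + ∫ s in t0..t, ∑ j : Fin d,
            σ j s T (f s T) * ∫ u in s..T, σ j s u (f s u)) →
      ∀ N : ℕ, 0 < N →
      ∀ γ : ℕ → ℝ → ℝ, (∀ k, Measurable (γ k)) → (∀ k s, |γ k s| ≤ Γ) →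
      ∀ κ : ℝ → ℕ → ℕ, (∀ i, Measurable fun s => κ s i) →
        (∀ s ∈ Set.Icc t0 tstar, ∀ i ≤ N,
          ellIdx t0 Tstar N s ≤ κ s i ∧ κ s i ≤ N) →
      ∀ ftil : ℕ → ℝ → ℝ,
        (∀ i ≤ N, ContinuousOn (ftil i) (Set.Icc t0 tstar)) →
        -- the maturity-discretized system of integral equations
        (∀ i ≤ N, ∀ t ∈ Set.Icc t0 tstar,
          ftil i t = f0 (Tgrid t0 Tstar N i) + ∫ s in t0..t, ∑ j : Fin d,
            σ j s (Tgrid t0 Tstar N i) (ftil i s) *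
              (((Tstar - t0) / N) *
                ∑ k ∈ Finset.Icc (ellIdx t0 Tstar N s) (κ s i),
                  γ k s * σ j s (Tgrid t0 Tstar N k) (ftil k s))) →
        -- (d) the drift quadrature has order `p` along the exact solution
        (∀ s ∈ Set.Icc t0 tstar, ∀ i ≤ N, ∀ j : Fin d,
          |((Tstar - t0) / N) *
              ∑ k ∈ Finset.Icc (ellIdx t0 Tstar N s) (κ s i),
                γ k s * σ j s (Tgrid t0 Tstar N k) (f s (Tgrid t0 Tstar N k)) -
            ∫ u in s..(Tgrid t0 Tstar N i), σ j s u (f s u)|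
              ≤ C₁ * ((Tstar - t0) / N) ^ p) →
      -- (b) order-`p` short-rate approximation coefficients λ_i(t)
      ellIdx t0 Tstar N tstar + θ ≤ N →
      ∀ lam : ℕ → ℝ → ℝ, (∀ i ≤ θ, Measurable (lam i)) →
        (∀ i ≤ θ, ∀ t, |lam i t| ≤ Λ) →
        (∀ t ∈ Set.Icc t0 tstar,
          |f t t - ∑ i ∈ Finset.range (θ + 1),
              lam i t * f t (Tgrid t0 Tstar N (ellIdx t0 Tstar N t + i))|
            ≤ C₁ * ((Tstar - t0) / N) ^ p) →
      -- (c) order-`p` bond-price quadrature weights γ̃_j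
      ∀ γtil : ℕ → ℝ, (∀ j, |γtil j| ≤ Γ) →
        (|((Tstar - t0) / N) *
            ∑ j ∈ Finset.Icc (ellIdx t0 Tstar N tstar + 1) N,
              γtil j * f tstar (Tgrid t0 Tstar N j) -
          ∫ u in tstar..Tstar, f tstar u| ≤ C₁ * ((Tstar - t0) / N) ^ p) →
      -- conclusion
      let Y : ℝ := ∫ s in t0..tstar, f s s
      let Z : ℝ := ∫ u in tstar..Tstar, f tstar u
      let Ytil : ℝ := ∫ s in t0..tstar, ∑ i ∈ Finset.range (θ + 1),
        lam i s * ftil (ellIdx t0 Tstar N s + i) s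
      let SZtil : ℝ := ((Tstar - t0) / N) *
        ∑ j ∈ Finset.Icc (ellIdx t0 Tstar N tstar + 1) N, γtil j * ftil j tstar
      |Real.exp (-Y) * G (Real.exp (-Z)) - Real.exp (-Ytil) * G (Real.exp (-SZtil))|
        ≤ K * ((Tstar - t0) / N) ^ p :=
  weak_T_discretization_price_error_order_p_general t0 tstar Tstar d C L Γ Λ C0 C₁ p LG θ h1 h2 hC
    hL hΓ hC₁ hLG G hGlip
end
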